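/- arXiv:1306.1054 — 7 statements merged into one kernel-verified Lean document; each statement's English description precedes it below -/
import Mathlib

section
/- Consider the multilayer parking process on 3 sites with arrival word w (a finite list with entries in {0,1,2}). Then the total number of layers r ≥ 1 such that at least one of the three columns is occupied at layer r in the final configuration κ_w equals n₁(w) + max(n₀(w), n₂(w)), where n_x(w) denotes the number of arrivals at column x in w. -/
/-- The landing layer of a particle arriving at column `x` in configuration `κ`:
the least layer `r ≥ 1` such that every column in the neighborhood
`N_x = {x-1, x, x+1} ∩ {0,1,2}` is unoccupied at layer `r`. -/
noncomputable def landingLayer (κ : Fin 3 → ℕ → Bool) (x : Fin 3) : ℕ :=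
  sInf {r : ℕ | 1 ≤ r ∧ ∀ y : Fin 3, |(x : ℤ) - (y : ℤ)| ≤ 1 → κ y r = false}

/-- Depositing one particle arriving at column `x` in configuration `κ`. -/
noncomputable def deposit (κ : Fin 3 → ℕ → Bool) (x : Fin 3) : Fin 3 → ℕ → Bool :=
  fun y r => if y = x ∧ r = landingLayer κ x then true else κ y r

/-- The configuration `κ_w` obtained from the empty configuration by processing
the arrivals in the word `w` in order. -/
noncomputable def parkConfig (w : List (Fin 3)) : Fin 3 → ℕ → Bool :=
  w.foldl deposit (fun _ _ => false)

lemma landing0 (κ : Fin 3 → ℕ → Bool) :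
    landingLayer κ 0 = sInf {r : ℕ | 1 ≤ r ∧ κ 0 r = false ∧ κ 1 r = false} := by
  unfold landingLayer
  congr 1
  ext r
  simp only [Set.mem_setOf_eq]
  constructor
  · rintro ⟨h1, h2⟩
    exact ⟨h1, h2 0 (by decide), h2 1 (by decide)⟩
  · rintro ⟨h1, h2, h3⟩
    refine ⟨h1, ?_⟩
    intro y hy
    fin_cases y
    · exact h2
    · exact h3
    · norm_num at hy

lemma landing2 (κ : Fin 3 → ℕ → Bool) :
    landingLayer κ 2 = sInf {r : ℕ | 1 ≤ r ∧ κ 1 r = false ∧ κ 2 r = false} := by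
  unfold landingLayer
  congr 1
  ext r
  simp only [Set.mem_setOf_eq]
  constructor
  · rintro ⟨h1, h2⟩
    exact ⟨h1, h2 1 (by decide), h2 2 (by decide)⟩
  · rintro ⟨h1, h2, h3⟩
    refine ⟨h1, ?_⟩
    intro y hy
    fin_cases y
    · norm_num at hy
    · exact h2
    · exact h3

lemma landing1 (κ : Fin 3 → ℕ → Bool) :
    landingLayer κ 1 = sInf {r : ℕ | 1 ≤ r ∧ ∀ y, κ y r = false} := by
  unfold landingLayer
  congr 1
  ext r
  simp only [Set.mem_setOf_eq]
  constructor
  · rintro ⟨h1, h2⟩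
    refine ⟨h1, fun y => ?_⟩
    fin_cases y
    · exact h2 0 (by decide)
    · exact h2 1 (by decide)
    · exact h2 2 (by decide)
  · rintro ⟨h1, h2⟩
    exact ⟨h1, fun y _ => h2 y⟩

/-- The invariant of the parking process: the union of occupied layers is the
interval `[1, b + max a c]`, and the sets of layers occupied in columns `{0,1}`
resp. `{1,2}` have sizes `a + b` resp. `b + c`. -/
def ParkInv (κ : Fin 3 → ℕ → Bool) (a b c : ℕ) : Prop :=
  (∀ r, (∃ y, κ y r = true) ↔ 1 ≤ r ∧ r ≤ b + max a c) ∧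
  {r | κ 0 r = true ∨ κ 1 r = true}.ncard = a + b ∧
  {r | κ 1 r = true ∨ κ 2 r = true}.ncard = b + c

lemma inv_dep0 {κ : Fin 3 → ℕ → Bool} {a b c : ℕ} (h : ParkInv κ a b c) :
    ParkInv (deposit κ 0) (a + 1) b c := by
  obtain ⟨h1, h01, h12⟩ := h
  set H := b + max a c with hH
  set S : Set ℕ := {r : ℕ | 1 ≤ r ∧ κ 0 r = false ∧ κ 1 r = false} with hS
  set g := sInf S with hgdef
  have hocc : ∀ y r, κ y r = true → 1 ≤ r ∧ r ≤ H := fun y r hy => (h1 r).mp ⟨y, hy⟩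
  have hfalse : ∀ y r, H < r → κ y r = false := by
    intro y r hr
    by_contra hc
    rw [Bool.not_eq_false] at hc
    have := (hocc y r hc).2; omega
  have hHmem : H + 1 ∈ S := ⟨by omega, hfalse 0 _ (by omega), hfalse 1 _ (by omega)⟩
  have hgmem : g ∈ S := Nat.sInf_mem ⟨H + 1, hHmem⟩
  obtain ⟨hg1, hg0f, hg1f⟩ := hgmem
  have hsub : {r | κ 0 r = true ∨ κ 1 r = true} ⊆ Set.Icc 1 H := by
    rintro r (hr | hr) <;> exact Set.mem_Icc.mpr (hocc _ _ hr)
  have hfin : {r | κ 0 r = true ∨ κ 1 r = true}.Finite :=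
    (Set.finite_Icc 1 H).subset hsub
  have hgnot : g ∉ {r | κ 0 r = true ∨ κ 1 r = true} := by
    rintro (hr | hr)
    · rw [hg0f] at hr; exact absurd hr (by simp)
    · rw [hg1f] at hr; exact absurd hr (by simp)
  have hdep : ∀ y r, deposit κ 0 y r = if y = 0 ∧ r = g then true else κ y r := by
    intro y r
    simp only [deposit, landing0, ← hgdef, ← hS]
  have hset01 : {r | deposit κ 0 0 r = true ∨ deposit κ 0 1 r = true}
      = insert g {r | κ 0 r = true ∨ κ 1 r = true} := by
    ext r
    simp only [Set.mem_setOf_eq, Set.mem_insert_iff, hdep]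
    rcases eq_or_ne r g with rfl | hrg
    · simp
    · simp [hrg]
  have hset12 : {r | deposit κ 0 1 r = true ∨ deposit κ 0 2 r = true}
      = {r | κ 1 r = true ∨ κ 2 r = true} := by
    ext r
    simp only [Set.mem_setOf_eq, hdep]
    simp [show (1 : Fin 3) ≠ 0 by decide, show (2 : Fin 3) ≠ 0 by decide]
  have hex : ∀ r, (∃ y, deposit κ 0 y r = true) ↔ (r = g ∨ ∃ y, κ y r = true) := by
    intro r
    constructor
    · rintro ⟨y, hy⟩
      rw [hdep] at hy
      split_ifs at hy with hc
      · exact Or.inl hc.2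
      · exact Or.inr ⟨y, hy⟩
    · rintro (rfl | ⟨y, hy⟩)
      · exact ⟨0, by rw [hdep]; simp⟩
      · refine ⟨y, ?_⟩
        rw [hdep]
        split_ifs <;> simp [hy]
  refine ⟨?_, ?_, ?_⟩
  · rcases le_or_gt c a with hca | hca
    · have hIcc_ncard : (Set.Icc 1 H).ncard = H := by
        rw [← Finset.coe_Icc, Set.ncard_coe_finset, Nat.card_Icc]; omega
      have heq : {r | κ 0 r = true ∨ κ 1 r = true} = Set.Icc 1 H :=
        Set.eq_of_subset_of_ncard_le hsub (by rw [h01, hIcc_ncard]; omega) (Set.finite_Icc 1 H)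
      have hgH : g = H + 1 := by
        have h2g : g ≤ H + 1 := Nat.sInf_le hHmem
        rcases Nat.lt_or_ge g (H + 1) with hlt | hge
        · exact absurd (heq ▸ Set.mem_Icc.mpr ⟨hg1, by omega⟩) hgnot
        · omega
      intro r
      rw [hex r, h1 r]
      omega
    · have hex0 : ∃ r, r ∈ Set.Icc 1 H ∧ r ∉ {r | κ 0 r = true ∨ κ 1 r = true} := by
        by_contra hc
        push_neg at hc
        have heq : {r | κ 0 r = true ∨ κ 1 r = true} = Set.Icc 1 H :=
          Set.Subset.antisymm hsub hc
        have : (Set.Icc 1 H).ncard = H := by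
          rw [← Finset.coe_Icc, Set.ncard_coe_finset, Nat.card_Icc]; omega
        rw [heq, this] at h01
        omega
      obtain ⟨r0, hr0, hr0n⟩ := hex0
      simp only [Set.mem_setOf_eq, not_or, Bool.not_eq_true] at hr0n
      have hr0S : r0 ∈ S := ⟨(Set.mem_Icc.mp hr0).1, hr0n.1, hr0n.2⟩
      have hgH : g ≤ H := le_trans (Nat.sInf_le hr0S) (Set.mem_Icc.mp hr0).2
      intro r
      rw [hex r, h1 r]
      omega
  · rw [hset01, Set.ncard_insert_of_notMem hgnot hfin, h01]
    omega
  · rw [hset12, h12]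

lemma inv_dep2 {κ : Fin 3 → ℕ → Bool} {a b c : ℕ} (h : ParkInv κ a b c) :
    ParkInv (deposit κ 2) a b (c + 1) := by
  obtain ⟨h1, h01, h12⟩ := h
  set H := b + max a c with hH
  set S : Set ℕ := {r : ℕ | 1 ≤ r ∧ κ 1 r = false ∧ κ 2 r = false} with hS
  set g := sInf S with hgdef
  have hocc : ∀ y r, κ y r = true → 1 ≤ r ∧ r ≤ H := fun y r hy => (h1 r).mp ⟨y, hy⟩
  have hfalse : ∀ y r, H < r → κ y r = false := by
    intro y r hr
    by_contra hc
    rw [Bool.not_eq_false] at hc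
    have := (hocc y r hc).2; omega
  have hHmem : H + 1 ∈ S := ⟨by omega, hfalse 1 _ (by omega), hfalse 2 _ (by omega)⟩
  have hgmem : g ∈ S := Nat.sInf_mem ⟨H + 1, hHmem⟩
  obtain ⟨hg1, hg1f, hg2f⟩ := hgmem
  have hsub : {r | κ 1 r = true ∨ κ 2 r = true} ⊆ Set.Icc 1 H := by
    rintro r (hr | hr) <;> exact Set.mem_Icc.mpr (hocc _ _ hr)
  have hfin : {r | κ 1 r = true ∨ κ 2 r = true}.Finite :=
    (Set.finite_Icc 1 H).subset hsub
  have hgnot : g ∉ {r | κ 1 r = true ∨ κ 2 r = true} := by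
    rintro (hr | hr)
    · rw [hg1f] at hr; exact absurd hr (by simp)
    · rw [hg2f] at hr; exact absurd hr (by simp)
  have hdep : ∀ y r, deposit κ 2 y r = if y = 2 ∧ r = g then true else κ y r := by
    intro y r
    simp only [deposit, landing2, ← hgdef, ← hS]
  have hset12 : {r | deposit κ 2 1 r = true ∨ deposit κ 2 2 r = true}
      = insert g {r | κ 1 r = true ∨ κ 2 r = true} := by
    ext r
    simp only [Set.mem_setOf_eq, Set.mem_insert_iff, hdep]
    rcases eq_or_ne r g with rfl | hrg
    · simp
    · simp [hrg]
  have hset01 : {r | deposit κ 2 0 r = true ∨ deposit κ 2 1 r = true}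
      = {r | κ 0 r = true ∨ κ 1 r = true} := by
    ext r
    simp only [Set.mem_setOf_eq, hdep]
    simp [show (0 : Fin 3) ≠ 2 by decide, show (1 : Fin 3) ≠ 2 by decide]
  have hex : ∀ r, (∃ y, deposit κ 2 y r = true) ↔ (r = g ∨ ∃ y, κ y r = true) := by
    intro r
    constructor
    · rintro ⟨y, hy⟩
      rw [hdep] at hy
      split_ifs at hy with hc
      · exact Or.inl hc.2
      · exact Or.inr ⟨y, hy⟩
    · rintro (rfl | ⟨y, hy⟩)
      · exact ⟨2, by rw [hdep]; simp⟩
      · refine ⟨y, ?_⟩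
        rw [hdep]
        split_ifs <;> simp [hy]
  refine ⟨?_, ?_, ?_⟩
  · rcases le_or_gt a c with hac | hac
    · have hIcc_ncard : (Set.Icc 1 H).ncard = H := by
        rw [← Finset.coe_Icc, Set.ncard_coe_finset, Nat.card_Icc]; omega
      have heq : {r | κ 1 r = true ∨ κ 2 r = true} = Set.Icc 1 H :=
        Set.eq_of_subset_of_ncard_le hsub (by rw [h12, hIcc_ncard]; omega) (Set.finite_Icc 1 H)
      have hgH : g = H + 1 := by
        have h2g : g ≤ H + 1 := Nat.sInf_le hHmem
        rcases Nat.lt_or_ge g (H + 1) with hlt | hge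
        · exact absurd (heq ▸ Set.mem_Icc.mpr ⟨hg1, by omega⟩) hgnot
        · omega
      intro r
      rw [hex r, h1 r]
      omega
    · have hex0 : ∃ r, r ∈ Set.Icc 1 H ∧ r ∉ {r | κ 1 r = true ∨ κ 2 r = true} := by
        by_contra hc
        push_neg at hc
        have heq : {r | κ 1 r = true ∨ κ 2 r = true} = Set.Icc 1 H :=
          Set.Subset.antisymm hsub hc
        have : (Set.Icc 1 H).ncard = H := by
          rw [← Finset.coe_Icc, Set.ncard_coe_finset, Nat.card_Icc]; omega
        rw [heq, this] at h12
        omega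
      obtain ⟨r0, hr0, hr0n⟩ := hex0
      simp only [Set.mem_setOf_eq, not_or, Bool.not_eq_true] at hr0n
      have hr0S : r0 ∈ S := ⟨(Set.mem_Icc.mp hr0).1, hr0n.1, hr0n.2⟩
      have hgH : g ≤ H := le_trans (Nat.sInf_le hr0S) (Set.mem_Icc.mp hr0).2
      intro r
      rw [hex r, h1 r]
      omega
  · rw [hset01, h01]
  · rw [hset12, Set.ncard_insert_of_notMem hgnot hfin, h12]
    omega

lemma inv_dep1 {κ : Fin 3 → ℕ → Bool} {a b c : ℕ} (h : ParkInv κ a b c) :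
    ParkInv (deposit κ 1) a (b + 1) c := by
  obtain ⟨h1, h01, h12⟩ := h
  set H := b + max a c with hH
  set S : Set ℕ := {r : ℕ | 1 ≤ r ∧ ∀ y, κ y r = false} with hS
  set g := sInf S with hgdef
  have hocc : ∀ y r, κ y r = true → 1 ≤ r ∧ r ≤ H := fun y r hy => (h1 r).mp ⟨y, hy⟩
  have hfalse : ∀ y r, H < r → κ y r = false := by
    intro y r hr
    by_contra hc
    rw [Bool.not_eq_false] at hc
    have := (hocc y r hc).2; omega
  have hHmem : H + 1 ∈ S := ⟨by omega, fun y => hfalse y _ (by omega)⟩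
  have hgmem : g ∈ S := Nat.sInf_mem ⟨H + 1, hHmem⟩
  have hgH : g = H + 1 := by
    have h2g : g ≤ H + 1 := Nat.sInf_le hHmem
    have h3g : H + 1 ≤ g := by
      by_contra hc
      push_neg at hc
      have hgle : g ≤ H := by omega
      have : ∃ y, κ y g = true := (h1 g).mpr ⟨hgmem.1, hgle⟩
      obtain ⟨y, hy⟩ := this
      rw [hgmem.2 y] at hy
      exact absurd hy (by simp)
    omega
  have hsub01 : {r | κ 0 r = true ∨ κ 1 r = true} ⊆ Set.Icc 1 H := by
    rintro r (hr | hr) <;> exact Set.mem_Icc.mpr (hocc _ _ hr)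
  have hsub12 : {r | κ 1 r = true ∨ κ 2 r = true} ⊆ Set.Icc 1 H := by
    rintro r (hr | hr) <;> exact Set.mem_Icc.mpr (hocc _ _ hr)
  have hfin01 : {r | κ 0 r = true ∨ κ 1 r = true}.Finite :=
    (Set.finite_Icc 1 H).subset hsub01
  have hfin12 : {r | κ 1 r = true ∨ κ 2 r = true}.Finite :=
    (Set.finite_Icc 1 H).subset hsub12
  have hgnot01 : g ∉ {r | κ 0 r = true ∨ κ 1 r = true} := by
    intro hr
    have := (Set.mem_Icc.mp (hsub01 hr)).2
    omega
  have hgnot12 : g ∉ {r | κ 1 r = true ∨ κ 2 r = true} := by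
    intro hr
    have := (Set.mem_Icc.mp (hsub12 hr)).2
    omega
  have hdep : ∀ y r, deposit κ 1 y r = if y = 1 ∧ r = g then true else κ y r := by
    intro y r
    simp only [deposit, landing1, ← hgdef, ← hS]
  have hset01 : {r | deposit κ 1 0 r = true ∨ deposit κ 1 1 r = true}
      = insert g {r | κ 0 r = true ∨ κ 1 r = true} := by
    ext r
    simp only [Set.mem_setOf_eq, Set.mem_insert_iff, hdep]
    rcases eq_or_ne r g with rfl | hrg
    · simp
    · simp [hrg]
  have hset12 : {r | deposit κ 1 1 r = true ∨ deposit κ 1 2 r = true}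
      = insert g {r | κ 1 r = true ∨ κ 2 r = true} := by
    ext r
    simp only [Set.mem_setOf_eq, Set.mem_insert_iff, hdep]
    rcases eq_or_ne r g with rfl | hrg
    · simp
    · simp [hrg]
  have hex : ∀ r, (∃ y, deposit κ 1 y r = true) ↔ (r = g ∨ ∃ y, κ y r = true) := by
    intro r
    constructor
    · rintro ⟨y, hy⟩
      rw [hdep] at hy
      split_ifs at hy with hc
      · exact Or.inl hc.2
      · exact Or.inr ⟨y, hy⟩
    · rintro (rfl | ⟨y, hy⟩)
      · exact ⟨1, by rw [hdep]; simp⟩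
      · refine ⟨y, ?_⟩
        rw [hdep]
        split_ifs <;> simp [hy]
  refine ⟨?_, ?_, ?_⟩
  · intro r
    rw [hex r, h1 r]
    omega
  · rw [hset01, Set.ncard_insert_of_notMem hgnot01 hfin01, h01]
    omega
  · rw [hset12, Set.ncard_insert_of_notMem hgnot12 hfin12, h12]
    omega

lemma inv_parkConfig (w : List (Fin 3)) :
    ParkInv (parkConfig w) (w.count 0) (w.count 1) (w.count 2) := by
  induction w using List.reverseRecOn with
  | nil =>
      refine ⟨fun r => ?_, ?_, ?_⟩
      · simp only [parkConfig, List.foldl_nil]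
        simp
        omega
      · simp [parkConfig]
      · simp [parkConfig]
  | append_singleton w x ih =>
      have hpark : parkConfig (w ++ [x]) = deposit (parkConfig w) x := by
        simp [parkConfig, List.foldl_append]
      have hcount : ∀ y : Fin 3, (w ++ [x]).count y = w.count y + if x = y then 1 else 0 := by
        intro y
        simp [List.count_append, List.count_singleton']
      rw [hpark]
      fin_cases x
      · have h0 := hcount 0; have h1 := hcount 1; have h2 := hcount 2
        simp only [if_pos rfl, if_neg (by decide : (0 : Fin 3) ≠ 1),
          if_neg (by decide : (0 : Fin 3) ≠ 2)] at h0 h1 h2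
        rw [h0, h1, h2]
        simpa using inv_dep0 ih
      · have h0 := hcount 0; have h1 := hcount 1; have h2 := hcount 2
        simp only [if_pos rfl, if_neg (by decide : (1 : Fin 3) ≠ 0),
          if_neg (by decide : (1 : Fin 3) ≠ 2)] at h0 h1 h2
        rw [h0, h1, h2]
        simpa using inv_dep1 ih
      · have h0 := hcount 0; have h1 := hcount 1; have h2 := hcount 2
        simp only [if_pos rfl, if_neg (by decide : (2 : Fin 3) ≠ 0),
          if_neg (by decide : (2 : Fin 3) ≠ 1)] at h0 h1 h2
        rw [h0, h1, h2]
        simpa using inv_dep2 ih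

/-- The total number of layers `r ≥ 1` in which at least one of the three
columns is occupied in the final configuration `κ_w` equals
`n₁(w) + max (n₀(w)) (n₂(w))`. -/
theorem total_height_eq (w : List (Fin 3)) :
    {r : ℕ | 1 ≤ r ∧ ∃ y : Fin 3, parkConfig w y r = true}.ncard =
      w.count 1 + max (w.count 0) (w.count 2) := by
  obtain ⟨h1, -, -⟩ := inv_parkConfig w
  have hset : {r : ℕ | 1 ≤ r ∧ ∃ y : Fin 3, parkConfig w y r = true}
      = Set.Icc 1 (w.count 1 + max (w.count 0) (w.count 2)) := by
    ext r
    simp only [Set.mem_setOf_eq, Set.mem_Icc, h1 r]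
    omega
  rw [hset, ← Finset.coe_Icc, Set.ncard_coe_finset, Nat.card_Icc]
  omega
end

section
/- Consider the multilayer parking process on 3 sites with arrival word w (a finite list with entries in {0,1,2}). Then the number of layers r ≥ 1 such that both side columns are occupied at layer r in the final configuration κ_w (i.e., κ_w(0,r) and κ_w(2,r) are both true) equals min(n₀(w), n₂(w)), where n_x(w) denotes the number of arrivals at column x in w. -/
def col (κ : Fin 3 → ℕ → Bool) (x : Fin 3) : Set ℕ := {r | κ x r = true}

def occupied (κ : Fin 3 → ℕ → Bool) : Set ℕ := {r | ∃ y, κ y r = true}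

def freeLayers (κ : Fin 3 → ℕ → Bool) (x : Fin 3) : Set ℕ :=
  {r | 1 ≤ r ∧ ∀ y : Fin 3, |(x : ℤ) - (y : ℤ)| ≤ 1 → κ y r = false}

lemma Set.insert_Icc_eq_Icc_max {a b c : ℕ} (hac : a ≤ c) (hcb : c ≤ b + 1) :
    insert c (Set.Icc a b) = Set.Icc a (max b c) := by
  ext r
  simp only [Set.mem_insert_iff, Set.mem_Icc]
  omega

lemma Set.ncard_inter_eq_min {α : Type*} {s t : Set α} (hs : s.Finite) (ht : t.Finite)
    (hst : s ⊆ t ∨ t ⊆ s) : (s ∩ t).ncard = min s.ncard t.ncard := by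
  rcases hst with hst | hts
  · rw [Set.inter_eq_self_of_subset_left hst, min_eq_left (Set.ncard_le_ncard hst ht)]
  · rw [Set.inter_eq_self_of_subset_right hts, min_eq_right (Set.ncard_le_ncard hts hs)]

section Deposit

variable {κ : Fin 3 → ℕ → Bool} {x : Fin 3} {N : ℕ}

lemma succ_mem_freeLayers (hN : occupied κ ⊆ Set.Icc 1 N) : N + 1 ∈ freeLayers κ x := by
  refine ⟨by omega, fun y _ => ?_⟩
  by_contra hy
  have := (hN ⟨y, by simpa using hy⟩).2
  omega

lemma landingLayer_mem_freeLayers (hN : occupied κ ⊆ Set.Icc 1 N) :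
    landingLayer κ x ∈ freeLayers κ x :=
  Nat.sInf_mem ⟨_, succ_mem_freeLayers hN⟩

lemma landingLayer_le {r : ℕ} (hr : r ∈ freeLayers κ x) : landingLayer κ x ≤ r :=
  Nat.sInf_le hr

lemma landingLayer_notMem_col (hN : occupied κ ⊆ Set.Icc 1 N) :
    landingLayer κ x ∉ col κ x := by
  intro hmem
  have hfree := (landingLayer_mem_freeLayers (x := x) hN).2 x (by simp)
  simp [col, hfree] at hmem

lemma col_deposit_self : col (deposit κ x) x = insert (landingLayer κ x) (col κ x) := by
  ext r
  by_cases hr : r = landingLayer κ x <;> simp [col, deposit, hr]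

lemma col_deposit_of_ne {y : Fin 3} (hyx : y ≠ x) : col (deposit κ x) y = col κ y := by
  ext r
  simp [col, deposit, hyx]

lemma occupied_deposit : occupied (deposit κ x) = insert (landingLayer κ x) (occupied κ) := by
  ext r
  by_cases hr : r = landingLayer κ x
  · simp only [occupied, deposit, hr, Set.mem_insert_iff, true_or, iff_true]
    exact ⟨x, by simp⟩
  · simp [occupied, deposit, hr]

end Deposit

structure ParkingInvariant (κ : Fin 3 → ℕ → Bool) (N : ℕ) : Prop where
  occupied_eq : occupied κ = Set.Icc 1 N
  adjacent : ∀ r (y z : Fin 3), y ≠ z → |(y : ℤ) - (z : ℤ)| ≤ 1 → κ y r = true → κ z r = false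
  nested : col κ 0 ⊆ col κ 2 ∨ col κ 2 ⊆ col κ 0

namespace ParkingInvariant

variable {κ : Fin 3 → ℕ → Bool} {N : ℕ}

lemma col_subset (h : ParkingInvariant κ N) (y : Fin 3) : col κ y ⊆ Set.Icc 1 N :=
  fun _ hr => h.occupied_eq ▸ ⟨y, hr⟩

lemma finite_col (h : ParkingInvariant κ N) (y : Fin 3) : (col κ y).Finite :=
  (Set.finite_Icc 1 N).subset (h.col_subset y)

lemma adjacent_deposit (h : ParkingInvariant κ N) (x : Fin 3) (r : ℕ) (y z : Fin 3) (hyz : y ≠ z)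
    (hnear : |(y : ℤ) - (z : ℤ)| ≤ 1) (hy : deposit κ x y r = true) : deposit κ x z r = false := by
  have hfree := (landingLayer_mem_freeLayers (κ := κ) (x := x) h.occupied_eq.le).2
  simp only [deposit] at hy ⊢
  by_cases hnew : y = x ∧ r = landingLayer κ x
  · obtain ⟨rfl, rfl⟩ := hnew
    simpa [Ne.symm hyz] using hfree z hnear
  rw [if_neg hnew] at hy
  by_cases hnew' : z = x ∧ r = landingLayer κ x
  · obtain ⟨rfl, rfl⟩ := hnew'
    rw [abs_sub_comm] at hnear
    simp [hfree y hnear] at hy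
  · rw [if_neg hnew']
    exact h.adjacent r y z hyz hnear hy

lemma landingLayer_mem_col (h : ParkingInvariant κ N) {a b : Fin 3}
    (hab : a = 0 ∧ b = 2 ∨ a = 2 ∧ b = 0) (hba : ¬ col κ b ⊆ col κ a) :
    landingLayer κ a ∈ col κ b := by
  obtain ⟨m, hmb, hma⟩ := Set.not_subset.mp hba
  obtain ⟨hnear, hnear_b⟩ : (∀ y : Fin 3, |(a : ℤ) - (y : ℤ)| ≤ 1 ↔ y ≠ b) ∧
      ∀ y : Fin 3, y ≠ a → |(b : ℤ) - (y : ℤ)| ≤ 1 := by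
    rcases hab with ⟨rfl, rfl⟩ | ⟨rfl, rfl⟩ <;> decide
  have hm : m ∈ freeLayers κ a := by
    refine ⟨(h.col_subset b hmb).1, fun y hy => ?_⟩
    by_cases hya : y = a
    · simpa [col, hya] using hma
    · exact h.adjacent m b y ((hnear y).1 hy).symm (hnear_b y hya) hmb
  have hfree := landingLayer_mem_freeLayers (κ := κ) (x := a) h.occupied_eq.le
  obtain ⟨y, hy⟩ : landingLayer κ a ∈ occupied κ :=
    h.occupied_eq ▸ ⟨hfree.1, (landingLayer_le hm).trans (h.col_subset b hmb).2⟩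
  by_contra hb
  exact absurd (hfree.2 y ((hnear y).2 (by rintro rfl; exact hb hy))) (by simp [hy])

lemma nested_deposit_side (h : ParkingInvariant κ N) {a b : Fin 3}
    (hab : a = 0 ∧ b = 2 ∨ a = 2 ∧ b = 0) (hnested : col κ a ⊆ col κ b ∨ col κ b ⊆ col κ a) :
    col (deposit κ a) a ⊆ col (deposit κ a) b ∨ col (deposit κ a) b ⊆ col (deposit κ a) a := by
  have hba : b ≠ a := by rcases hab with ⟨rfl, rfl⟩ | ⟨rfl, rfl⟩ <;> decide
  rw [col_deposit_self, col_deposit_of_ne hba]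
  by_cases hsub : col κ b ⊆ col κ a
  · exact Or.inr (hsub.trans (Set.subset_insert _ _))
  · exact Or.inl (Set.insert_subset (h.landingLayer_mem_col hab hsub) (hnested.resolve_right hsub))

lemma step (h : ParkingInvariant κ N) (x : Fin 3) :
    ParkingInvariant (deposit κ x) (max N (landingLayer κ x)) where
  occupied_eq := by
    have hfree := landingLayer_mem_freeLayers (κ := κ) (x := x) h.occupied_eq.le
    rw [occupied_deposit, h.occupied_eq, Set.insert_Icc_eq_Icc_max hfree.1
      (landingLayer_le (succ_mem_freeLayers h.occupied_eq.le))]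
  adjacent := h.adjacent_deposit x
  nested := by
    fin_cases x
    · exact h.nested_deposit_side (Or.inl ⟨rfl, rfl⟩) h.nested
    · rw [col_deposit_of_ne (by decide), col_deposit_of_ne (by decide)]
      exact h.nested
    · exact (h.nested_deposit_side (Or.inr ⟨rfl, rfl⟩) h.nested.symm).symm

end ParkingInvariant

lemma parkConfig_append_singleton (w : List (Fin 3)) (x : Fin 3) :
    parkConfig (w ++ [x]) = deposit (parkConfig w) x := by
  simp [parkConfig]

lemma exists_parkingInvariant_parkConfig (w : List (Fin 3)) :
    ∃ N, ParkingInvariant (parkConfig w) N := by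
  induction w using List.reverseRecOn with
  | nil =>
    refine ⟨0, ⟨?_, by simp [parkConfig], by simp [parkConfig, col]⟩⟩
    ext r
    simp [parkConfig, occupied]
  | append_singleton w x ih =>
    obtain ⟨N, h⟩ := ih
    exact ⟨_, parkConfig_append_singleton w x ▸ h.step x⟩

lemma ncard_col_parkConfig (w : List (Fin 3)) (y : Fin 3) :
    (col (parkConfig w) y).ncard = w.count y := by
  induction w using List.reverseRecOn with
  | nil => simp [parkConfig, col]
  | append_singleton w x ih =>
    obtain ⟨N, h⟩ := exists_parkingInvariant_parkConfig w
    rw [parkConfig_append_singleton, List.count_append]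
    by_cases hyx : y = x
    · subst hyx
      rw [col_deposit_self, Set.ncard_insert_of_notMem
        (landingLayer_notMem_col h.occupied_eq.le) (h.finite_col y), ih]
      simp
    · rw [col_deposit_of_ne hyx, ih]
      simp [Ne.symm hyx]

/-- The number of layers `r ≥ 1` in which both side columns are occupied in the
final configuration `κ_w` equals `min (n₀(w)) (n₂(w))`. -/
theorem both_sides_occupied_eq (w : List (Fin 3)) :
    {r : ℕ | 1 ≤ r ∧ parkConfig w 0 r = true ∧ parkConfig w 2 r = true}.ncard =
      min (w.count 0) (w.count 2) := by
  obtain ⟨N, h⟩ := exists_parkingInvariant_parkConfig w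
  have hlayers : {r : ℕ | 1 ≤ r ∧ parkConfig w 0 r = true ∧ parkConfig w 2 r = true} =
      col (parkConfig w) 0 ∩ col (parkConfig w) 2 :=
    Set.ext fun r => ⟨fun hr => ⟨hr.2.1, hr.2.2⟩, fun hr => ⟨(h.col_subset 0 hr.1).1, hr⟩⟩
  rw [hlayers, Set.ncard_inter_eq_min (h.finite_col 0) (h.finite_col 2) h.nested,
    ncard_col_parkConfig, ncard_col_parkConfig]
end

section
/- Let t > 0 and let X, Y, Z be independent random variables on a probability space, each Poisson distributed with parameter t. Then for every h ∈ ℕ, P(X + max(Y, Z) = h) = 2 tʰ e^{−3t} Σ_{k=0}^{h} [ (1/(k!(h−k)!)) Σ_{j=0}^{k−1} tʲ/j! ] + tʰ e^{−3t} Σ_{k=0}^{h} tᵏ/(k!² (h−k)!). -/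
/-!
Independence makes the law of `(X, Y, Z)` the product of three Poisson laws, and the event
`X + max(Y, Z) = h` is the finite union of the fibres over the triples `(a, b, c)` with
`a + max(b, c) = h`. Writing `p` for the Poisson weights and `S m = Σ_{j<m} p j`, the pairs with
`max(b, c) = m` carry mass `S(m+1)² - S(m)² = 2 p m S m + p m²`, so the probability is
`Σ_{k≤h} p(h-k) (2 p k S k + p k²)`, which expands to the stated formula.
-/

open MeasureTheory ProbabilityTheory Real Finset
open scoped Nat

section OuterMeasure

variable {Ω α : Type*} [MeasurableSpace Ω] {μ : Measure Ω} [IsFiniteMeasure μ]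

/-- No measurability of `f` is needed: countable subadditivity bounds `μ (f ⁻¹' s)` and
`μ (f ⁻¹' sᶜ)` from above, and the two bounds add up to `μ univ`, which forces equality. -/
theorem measure_preimage_eq_tsum_of_tsum_eq_measure_univ [Countable α] {f : Ω → α}
    (hf : ∑' a, μ (f ⁻¹' {a}) = μ Set.univ) (s : Set α) :
    μ (f ⁻¹' s) = ∑' a : s, μ (f ⁻¹' {(a : α)}) := by
  have upper : ∀ t : Set α, μ (f ⁻¹' t) ≤ ∑' a : t, μ (f ⁻¹' {(a : α)}) := fun t => by
    rw [← Set.biUnion_preimage_singleton]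
    exact measure_biUnion_le μ t.to_countable _
  have hsplit :
      (∑' a : s, μ (f ⁻¹' {(a : α)})) + ∑' a : ↑sᶜ, μ (f ⁻¹' {(a : α)}) = μ Set.univ := by
    rw [ENNReal.summable.tsum_add_tsum_compl (f := fun a => μ (f ⁻¹' {a})) ENNReal.summable, hf]
  have hcompl_ne_top : ∑' a : ↑sᶜ, μ (f ⁻¹' {(a : α)}) ≠ ⊤ :=
    ne_top_of_le_ne_top (measure_ne_top μ Set.univ) (hsplit ▸ le_add_self)
  refine le_antisymm (upper s) (ENNReal.le_of_add_le_add_right hcompl_ne_top ?_)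
  calc (∑' a : s, μ (f ⁻¹' {(a : α)})) + ∑' a : ↑sᶜ, μ (f ⁻¹' {(a : α)})
      = μ (f ⁻¹' s ∪ f ⁻¹' sᶜ) := by
        rw [hsplit, ← Set.preimage_union, Set.union_compl_self, Set.preimage_univ]
    _ ≤ μ (f ⁻¹' s) + μ (f ⁻¹' sᶜ) := measure_union_le _ _
    _ ≤ μ (f ⁻¹' s) + ∑' a : ↑sᶜ, μ (f ⁻¹' {(a : α)}) := add_le_add le_rfl (upper sᶜ)

end OuterMeasure

theorem ProbabilityTheory.iIndepFun.measure_inter_preimage_three {Ω β : Type*}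
    [MeasurableSpace Ω] {μ : Measure Ω} [MeasurableSpace β] {X Y Z : Ω → β}
    (hXYZ : iIndepFun ![X, Y, Z] μ) {A B C : Set β} (hA : MeasurableSet A)
    (hB : MeasurableSet B) (hC : MeasurableSet C) :
    μ (X ⁻¹' A ∩ (Y ⁻¹' B ∩ Z ⁻¹' C)) = μ (X ⁻¹' A) * (μ (Y ⁻¹' B) * μ (Z ⁻¹' C)) := by
  have hinter : ⋂ i ∈ univ, ![X, Y, Z] i ⁻¹' ![A, B, C] i = X ⁻¹' A ∩ (Y ⁻¹' B ∩ Z ⁻¹' C) := by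
    ext ω
    simp [Fin.forall_fin_succ]
  rw [← hinter, hXYZ.measure_inter_preimage_eq_mul univ (by simp [Fin.forall_fin_succ, hA, hB, hC]),
    Fin.prod_univ_three, mul_assoc]
  rfl

section MaxSums

variable {R : Type*} [CommRing R]

theorem filter_max_lt_range_product_range {n k : ℕ} (hk : k ≤ n) :
    (range n ×ˢ range n).filter (fun x => max x.1 x.2 < k) = range k ×ˢ range k := by
  ext x
  simp only [mem_filter, mem_product, mem_range, max_lt_iff]
  omega

/-- `max b c = m` is `max b c < m + 1` minus `max b c < m`, and each of these cuts out a square. -/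
theorem sum_filter_max_eq (p : ℕ → R) {m n : ℕ} (hmn : m < n) :
    ∑ x ∈ (range n ×ˢ range n).filter (fun x => max x.1 x.2 = m), p x.1 * p x.2 =
      2 * p m * ∑ j ∈ range m, p j + p m ^ 2 := by
  have square : ∀ k ≤ n, ∑ x ∈ (range n ×ˢ range n).filter (fun x => max x.1 x.2 < k),
      p x.1 * p x.2 = (∑ j ∈ range k, p j) ^ 2 := fun k hk => by
    rw [filter_max_lt_range_product_range hk, sum_product, sq, sum_mul_sum]
  have hdiff : (range n ×ˢ range n).filter (fun x => max x.1 x.2 = m) =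
      (range n ×ˢ range n).filter (fun x => max x.1 x.2 < m + 1) \
        (range n ×ˢ range n).filter (fun x => max x.1 x.2 < m) := by
    ext x
    simp only [mem_sdiff, mem_filter, mem_product, mem_range]
    omega
  rw [hdiff, sum_sdiff_eq_sub (monotone_filter_right _ fun _ _ => Nat.lt_succ_of_lt),
    square _ hmn, square _ hmn.le, sum_range_succ]
  ring

theorem sum_filter_add_max_eq (p : ℕ → R) (h : ℕ) :
    ∑ x ∈ (range (h + 1) ×ˢ range (h + 1) ×ˢ range (h + 1)).filter
        (fun x => x.1 + max x.2.1 x.2.2 = h), p x.1 * (p x.2.1 * p x.2.2) =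
      ∑ k ∈ range (h + 1), p (h - k) * (2 * p k * ∑ j ∈ range k, p j + p k ^ 2) := by
  rw [← sum_range_reflect, sum_filter, sum_product]
  refine sum_congr rfl fun a ha => ?_
  have ha : a ≤ h := Nat.lt_succ_iff.mp (mem_range.mp ha)
  rw [show h - (h + 1 - 1 - a) = a by omega, show h + 1 - 1 - a = h - a by omega,
    ← sum_filter_max_eq p (n := h + 1) (by omega), mul_sum, sum_filter]
  refine sum_congr rfl fun x _ => ?_
  dsimp only
  by_cases hx : max x.1 x.2 = h - a
  · rw [if_pos (by omega), if_pos hx]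
  · rw [if_neg (by omega), if_neg hx]

end MaxSums

section Poisson

variable (t : ℝ)

noncomputable def poissonWeight (k : ℕ) : ℝ := exp (-t) * t ^ k / k !

variable {t}

theorem poissonWeight_nonneg (ht : 0 ≤ t) (k : ℕ) : 0 ≤ poissonWeight t k := by
  unfold poissonWeight; positivity

theorem tsum_ofReal_poissonWeight (ht : 0 ≤ t) :
    ∑' k, ENNReal.ofReal (poissonWeight t k) = 1 := by
  have hsum : HasSum (poissonWeight t) 1 := hasSum_one_poissonMeasure ⟨t, ht⟩
  rw [← ENNReal.ofReal_tsum_of_nonneg (poissonWeight_nonneg ht) hsum.summable, hsum.tsum_eq,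
    ENNReal.ofReal_one]

theorem sum_poissonWeight_height_eq (h : ℕ) :
    ∑ k ∈ range (h + 1), poissonWeight t (h - k) *
        (2 * poissonWeight t k * ∑ j ∈ range k, poissonWeight t j + poissonWeight t k ^ 2) =
      2 * t ^ h * exp (-(3 * t)) *
          ∑ k ∈ range (h + 1), 1 / ((k ! : ℝ) * (h - k) !) * ∑ j ∈ range k, t ^ j / j ! +
        t ^ h * exp (-(3 * t)) * ∑ k ∈ range (h + 1), t ^ k / ((k ! : ℝ) ^ 2 * (h - k) !) := by
  rw [mul_sum, mul_sum, ← sum_add_distrib]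
  refine sum_congr rfl fun k hk => ?_
  have hk : k ≤ h := Nat.lt_succ_iff.mp (mem_range.mp hk)
  have hpow : t ^ h = t ^ k * t ^ (h - k) := by rw [← pow_add, Nat.add_sub_cancel' hk]
  have hexp : exp (-(3 * t)) = exp (-t) ^ 3 := by rw [← exp_nat_mul]; ring_nf
  have hpartial : ∑ j ∈ range k, poissonWeight t j = exp (-t) * ∑ j ∈ range k, t ^ j / j ! := by
    rw [mul_sum]; exact sum_congr rfl fun j _ => mul_div_assoc _ _ _
  rw [hpartial, hpow, hexp]
  simp only [poissonWeight]
  field_simp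

end Poisson

/-- For independent Poisson(t) variables `X`, `Y`, `Z`:
`P(X + max(Y,Z) = h) = 2 tʰ e^{-3t} Σ_{k≤h} (1/(k!(h-k)!)) Σ_{j<k} tʲ/j!
  + tʰ e^{-3t} Σ_{k≤h} tᵏ/(k!²(h-k)!)`. -/
theorem prob_height_poisson_eq {Ω : Type*} [MeasurableSpace Ω] (μ : Measure Ω)
    [IsProbabilityMeasure μ] (t : ℝ) (ht : 0 < t) (X Y Z : Ω → ℕ)
    (hIndep : iIndepFun (m := fun _ : Fin 3 => (inferInstance : MeasurableSpace ℕ)) ![X, Y, Z] μ)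
    (hX : ∀ k : ℕ, μ {ω | X ω = k} = ENNReal.ofReal (exp (-t) * t ^ k / (Nat.factorial k)))
    (hY : ∀ k : ℕ, μ {ω | Y ω = k} = ENNReal.ofReal (exp (-t) * t ^ k / (Nat.factorial k)))
    (hZ : ∀ k : ℕ, μ {ω | Z ω = k} = ENNReal.ofReal (exp (-t) * t ^ k / (Nat.factorial k)))
    (h : ℕ) :
    μ {ω | X ω + max (Y ω) (Z ω) = h} =
      ENNReal.ofReal
        (2 * t ^ h * exp (-(3 * t)) *
            ∑ k ∈ range (h + 1),
              (1 / ((Nat.factorial k) * (Nat.factorial (h - k)))) *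
                ∑ j ∈ range k, t ^ j / (Nat.factorial j) +
          t ^ h * exp (-(3 * t)) *
            ∑ k ∈ range (h + 1),
              t ^ k / ((Nat.factorial k) ^ 2 * (Nat.factorial (h - k)))) := by
  have hw : ∀ k, 0 ≤ poissonWeight t k := poissonWeight_nonneg ht.le
  let XYZ : Ω → ℕ × ℕ × ℕ := fun ω => (X ω, Y ω, Z ω)
  have hfiber : ∀ x, μ (XYZ ⁻¹' {x}) =
      ENNReal.ofReal (poissonWeight t x.1 * (poissonWeight t x.2.1 * poissonWeight t x.2.2)) := by
    rintro ⟨a, b, c⟩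
    rw [← Set.singleton_prod_singleton, ← Set.singleton_prod_singleton, Set.mk_preimage_prod,
      Set.mk_preimage_prod, hIndep.measure_inter_preimage_three trivial trivial trivial,
      ENNReal.ofReal_mul (hw a), ENNReal.ofReal_mul (hw b)]
    exact congr_arg₂ _ (hX a) (congr_arg₂ _ (hY b) (hZ c))
  have htotal : ∑' x, μ (XYZ ⁻¹' {x}) = μ Set.univ := by
    simp_rw [hfiber, ENNReal.ofReal_mul (hw _)]
    simp [ENNReal.tsum_prod', ENNReal.tsum_mul_left, tsum_ofReal_poissonWeight ht.le]
  have hevent : {ω | X ω + max (Y ω) (Z ω) = h} = XYZ ⁻¹' ↑((range (h + 1) ×ˢ range (h + 1) ×ˢ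
      range (h + 1)).filter (fun x => x.1 + max x.2.1 x.2.2 = h)) := by
    ext ω
    simp only [Set.mem_ofPred_eq, Set.mem_preimage, coe_filter, mem_product, mem_range, XYZ]
    omega
  rw [hevent, measure_preimage_eq_tsum_of_tsum_eq_measure_univ htotal,
    Finset.tsum_subtype' _ fun x => μ (XYZ ⁻¹' {x}), sum_congr rfl fun x _ => hfiber x,
    ← ENNReal.ofReal_sum_of_nonneg fun x _ => mul_nonneg (hw _) (mul_nonneg (hw _) (hw _)),
    sum_filter_add_max_eq, sum_poissonWeight_height_eq]
end

section
/- For every natural number h and every real t ≥ 0, ∫₀ᵗ s^h e^{−3s} [ 2 Σ_{k=0}^{h} (1/(k!(h−k)!)) Σ_{j=0}^{k−1} sʲ/j! + Σ_{k=0}^{h} sᵏ/(k!²(h−k)!) ] ds = Σ_{k=0}^{h} [ C(h,k) C(h+k,k) (1/3)^{h+k+1} + 2 C(h,k) Σ_{j=0}^{k−1} C(h+j,j) (1/3)^{h+j+1} ] − e^{−3t} Σ_{k=0}^{h} [ C(h,k) C(h+k,k) (1/3)^{h+k+1} Σ_{i=0}^{h+k} (3t)^i/i! + 2 C(h,k)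 Σ_{j=0}^{k−1} C(h+j,j) (1/3)^{h+j+1} Σ_{i=0}^{h+j} (3t)^i/i! ]. (This is the time-dependent density ρ_t^{(h+1)}(0) of the center site at layer h+1 in the 3-site multilayer parking system with unit-rate Poisson arrivals, obtained by integrating the probability that the height at the center equals h.) -/
open Real Finset

/-!
Since `(h + j)! = C(h, k) C(h + j, j) k! (h - k)! j!` for `k ≤ h`, every monomial
`s^h e^{-3s} s^j / (k! (h - k)! j!)` of the integrand is `C(h, k) C(h + j, j) 3^{-(h + j + 1)}`
times the Erlang density `3^{n+1} s^n e^{-3s} / n!` with `n = h + j`. The latter has the explicit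
antiderivative `-e^{-3s} ∑_{i ≤ n} (3s)^i / i!`, so its integral over `[0, t]` is the Erlang
distribution function `1 - e^{-3t} ∑_{i ≤ n} (3t)^i / i!`, and the formula follows termwise.
-/

noncomputable def erlangPDF (a : ℝ) (n : ℕ) (s : ℝ) : ℝ :=
  a ^ (n + 1) * s ^ n * exp (-(a * s)) / n.factorial

@[fun_prop]
theorem continuous_erlangPDF (a : ℝ) (n : ℕ) : Continuous (erlangPDF a n) := by
  unfold erlangPDF; fun_prop

theorem hasDerivAt_sum_range_pow_div_factorial (n : ℕ) (x : ℝ) :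
    HasDerivAt (fun x : ℝ => ∑ i ∈ range (n + 1), x ^ i / i.factorial)
      (∑ i ∈ range n, x ^ i / i.factorial) x := by
  induction n with
  | zero => simpa using hasDerivAt_const x (1 : ℝ)
  | succ n ih =>
    have hsplit : (fun x : ℝ => ∑ i ∈ range (n + 2), x ^ i / (i.factorial : ℝ)) = fun x : ℝ =>
        ∑ i ∈ range (n + 1), x ^ i / (i.factorial : ℝ) + x ^ (n + 1) / ((n + 1).factorial : ℝ) :=
      funext fun _ => sum_range_succ _ _
    rw [hsplit, sum_range_succ]
    refine ih.fun_add (((hasDerivAt_pow (n + 1) x).div_const _).congr_deriv ?_)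
    rw [Nat.factorial_succ]
    push_cast
    field_simp

theorem hasDerivAt_neg_exp_mul_sum_range (a : ℝ) (n : ℕ) (x : ℝ) :
    HasDerivAt (fun x : ℝ => -(exp (-(a * x)) * ∑ i ∈ range (n + 1), (a * x) ^ i / i.factorial))
      (erlangPDF a n x) x := by
  have hexp : HasDerivAt (fun x : ℝ => exp (-(a * x))) (exp (-(a * x)) * -a) x := by
    simpa using (((hasDerivAt_id x).const_mul a).neg).exp
  have hsum : HasDerivAt (fun x : ℝ => ∑ i ∈ range (n + 1), (a * x) ^ i / i.factorial)
      ((∑ i ∈ range n, (a * x) ^ i / i.factorial) * a) x := by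
    simpa [Function.comp_def] using (hasDerivAt_sum_range_pow_div_factorial n (a * x)).comp x
      ((hasDerivAt_id x).const_mul a)
  refine (hexp.mul hsum).neg.congr_deriv ?_
  rw [erlangPDF, sum_range_succ _ n]
  field_simp
  ring

theorem integral_erlangPDF (a : ℝ) (n : ℕ) (t : ℝ) :
    ∫ s in (0 : ℝ)..t, erlangPDF a n s =
      1 - exp (-(a * t)) * ∑ i ∈ range (n + 1), (a * t) ^ i / i.factorial := by
  have hsum_zero : ∑ i ∈ range (n + 1), (0 : ℝ) ^ i / i.factorial = 1 := by
    simp [sum_range_succ']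
  rw [intervalIntegral.integral_eq_sub_of_hasDerivAt
    (fun s _ => hasDerivAt_neg_exp_mul_sum_range a n s)
    ((continuous_erlangPDF a n).intervalIntegrable _ _)]
  simp only [mul_zero, neg_zero, exp_zero, hsum_zero]
  ring

theorem choose_mul_choose_mul_factorial (h k j : ℕ) (hk : k ≤ h) :
    h.choose k * (h + j).choose j * (k.factorial * (h - k).factorial * j.factorial) =
      (h + j).factorial := by
  rw [← Nat.add_choose_mul_factorial_mul_factorial, ← Nat.choose_mul_factorial_mul_factorial hk]
  ring

theorem pow_mul_exp_mul_div_factorial_eq_erlangPDF {a : ℝ} (ha : a ≠ 0) {h k : ℕ} (hk : k ≤ h)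
    (j : ℕ) (s : ℝ) :
    s ^ h * exp (-(a * s)) * (1 / (k.factorial * (h - k).factorial) * (s ^ j / j.factorial)) =
      h.choose k * (h + j).choose j * (1 / a) ^ (h + j + 1) * erlangPDF a (h + j) s := by
  have hfac : ((h + j).factorial : ℝ) =
      h.choose k * (h + j).choose j * (k.factorial * (h - k).factorial * j.factorial) := by
    exact_mod_cast (choose_mul_choose_mul_factorial h k j hk).symm
  have hk' : (h.choose k : ℝ) ≠ 0 := by exact_mod_cast (Nat.choose_pos hk).ne'
  have hj' : ((h + j).choose j : ℝ) ≠ 0 := by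
    exact_mod_cast (Nat.choose_pos (Nat.le_add_left j h)).ne'
  rw [erlangPDF, hfac, one_div_pow]
  field_simp
  ring

theorem integrand_eq_sum_erlangPDF (h : ℕ) (s : ℝ) :
    s ^ h * exp (-(3 * s)) *
        (2 * ∑ k ∈ range (h + 1),
              (1 / ((Nat.factorial k) * (Nat.factorial (h - k)))) *
                ∑ j ∈ range k, s ^ j / (Nat.factorial j) +
          ∑ k ∈ range (h + 1),
            s ^ k / ((Nat.factorial k) ^ 2 * (Nat.factorial (h - k)))) =
      ∑ k ∈ range (h + 1),
        (2 * ∑ j ∈ range k, (h.choose k * (h + j).choose j * (1 / 3 : ℝ) ^ (h + j + 1)) *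
            erlangPDF 3 (h + j) s +
          (h.choose k * (h + k).choose k * (1 / 3 : ℝ) ^ (h + k + 1)) *
            erlangPDF 3 (h + k) s) := by
  simp only [mul_add, mul_sum, sum_add_distrib]
  congr 1
  · refine sum_congr rfl fun k hk => sum_congr rfl fun j _ => ?_
    rw [← pow_mul_exp_mul_div_factorial_eq_erlangPDF three_ne_zero (mem_range_succ_iff.mp hk)]
    ring
  · refine sum_congr rfl fun k hk => ?_
    rw [← pow_mul_exp_mul_div_factorial_eq_erlangPDF three_ne_zero (mem_range_succ_iff.mp hk)]
    ring

theorem integral_erlangPDF_mixture_term (h k : ℕ) (t : ℝ) :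
    ∫ s in (0 : ℝ)..t,
        2 * ∑ j ∈ range k, (h.choose k * (h + j).choose j * (1 / 3 : ℝ) ^ (h + j + 1)) *
            erlangPDF 3 (h + j) s +
          (h.choose k * (h + k).choose k * (1 / 3 : ℝ) ^ (h + k + 1)) * erlangPDF 3 (h + k) s =
      ((h.choose k : ℝ) * ((h + k).choose k : ℝ) * (1 / 3 : ℝ) ^ (h + k + 1) +
          2 * (h.choose k : ℝ) *
            ∑ j ∈ range k, ((h + j).choose j : ℝ) * (1 / 3 : ℝ) ^ (h + j + 1)) -
        exp (-(3 * t)) *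
          ((h.choose k : ℝ) * ((h + k).choose k : ℝ) * (1 / 3 : ℝ) ^ (h + k + 1) *
              ∑ i ∈ range (h + k + 1), (3 * t) ^ i / (Nat.factorial i) +
            2 * (h.choose k : ℝ) *
              ∑ j ∈ range k,
                ((h + j).choose j : ℝ) * (1 / 3 : ℝ) ^ (h + j + 1) *
                  ∑ i ∈ range (h + j + 1), (3 * t) ^ i / (Nat.factorial i)) := by
  rw [intervalIntegral.integral_add (Continuous.intervalIntegrable (by fun_prop) _ _)
      (Continuous.intervalIntegrable (by fun_prop) _ _),
    intervalIntegral.integral_const_mul,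
    intervalIntegral.integral_finsetSum fun j _ => Continuous.intervalIntegrable (by fun_prop) _ _]
  simp only [intervalIntegral.integral_const_mul, integral_erlangPDF]
  rw [sum_congr rfl fun j _ => show
      (h.choose k * (h + j).choose j * (1 / 3 : ℝ) ^ (h + j + 1)) *
          (1 - exp (-(3 * t)) * ∑ i ∈ range (h + j + 1), (3 * t) ^ i / i.factorial) =
        h.choose k * (((h + j).choose j : ℝ) * (1 / 3 : ℝ) ^ (h + j + 1)) -
          exp (-(3 * t)) * (h.choose k * (((h + j).choose j : ℝ) * (1 / 3 : ℝ) ^ (h + j + 1) *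
            ∑ i ∈ range (h + j + 1), (3 * t) ^ i / i.factorial)) by ring,
    sum_sub_distrib, ← mul_sum, ← mul_sum, ← mul_sum]
  ring

theorem density_integral_eq_general (h : ℕ) (t : ℝ) :
    (∫ s in (0 : ℝ)..t, s ^ h * exp (-(3 * s)) *
        (2 * ∑ k ∈ range (h + 1),
              (1 / ((Nat.factorial k) * (Nat.factorial (h - k)))) *
                ∑ j ∈ range k, s ^ j / (Nat.factorial j) +
          ∑ k ∈ range (h + 1),
            s ^ k / ((Nat.factorial k) ^ 2 * (Nat.factorial (h - k))))) =
      (∑ k ∈ range (h + 1),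
          ((h.choose k : ℝ) * ((h + k).choose k : ℝ) * (1 / 3 : ℝ) ^ (h + k + 1) +
            2 * (h.choose k : ℝ) *
              ∑ j ∈ range k, ((h + j).choose j : ℝ) * (1 / 3 : ℝ) ^ (h + j + 1))) -
        exp (-(3 * t)) *
          ∑ k ∈ range (h + 1),
            ((h.choose k : ℝ) * ((h + k).choose k : ℝ) * (1 / 3 : ℝ) ^ (h + k + 1) *
                ∑ i ∈ range (h + k + 1), (3 * t) ^ i / (Nat.factorial i) +
              2 * (h.choose k : ℝ) *
                ∑ j ∈ range k,
                  ((h + j).choose j : ℝ) * (1 / 3 : ℝ) ^ (h + j + 1) *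
                    ∑ i ∈ range (h + j + 1), (3 * t) ^ i / (Nat.factorial i)) := by
  rw [intervalIntegral.integral_congr fun s _ => integrand_eq_sum_erlangPDF h s,
    intervalIntegral.integral_finsetSum fun k _ => Continuous.intervalIntegrable (by fun_prop) _ _,
    sum_congr rfl fun k _ => integral_erlangPDF_mixture_term h k t, sum_sub_distrib, ← mul_sum]

/-- Integrating the probability that the height at the center equals `h` gives the
time-dependent density `ρ_t^{(h+1)}(0)` of the center site at layer `h+1` in the
3-site multilayer parking system with unit-rate Poisson arrivals. -/
theorem density_integral_eq (h : ℕ) (t : ℝ) (ht : 0 ≤ t) :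
    (∫ s in (0 : ℝ)..t, s ^ h * exp (-(3 * s)) *
        (2 * ∑ k ∈ range (h + 1),
              (1 / ((Nat.factorial k) * (Nat.factorial (h - k)))) *
                ∑ j ∈ range k, s ^ j / (Nat.factorial j) +
          ∑ k ∈ range (h + 1),
            s ^ k / ((Nat.factorial k) ^ 2 * (Nat.factorial (h - k))))) =
      (∑ k ∈ range (h + 1),
          ((h.choose k : ℝ) * ((h + k).choose k : ℝ) * (1 / 3 : ℝ) ^ (h + k + 1) +
            2 * (h.choose k : ℝ) *
              ∑ j ∈ range k, ((h + j).choose j : ℝ) * (1 / 3 : ℝ) ^ (h + j + 1))) -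
        exp (-(3 * t)) *
          ∑ k ∈ range (h + 1),
            ((h.choose k : ℝ) * ((h + k).choose k : ℝ) * (1 / 3 : ℝ) ^ (h + k + 1) *
                ∑ i ∈ range (h + k + 1), (3 * t) ^ i / (Nat.factorial i) +
              2 * (h.choose k : ℝ) *
                ∑ j ∈ range k,
                  ((h + j).choose j : ℝ) * (1 / 3 : ℝ) ^ (h + j + 1) *
                    ∑ i ∈ range (h + j + 1), (3 * t) ^ i / (Nat.factorial i)) :=
  density_integral_eq_general h t
end

section
/- Define for each natural number h the end-density ρ^{(h+1)} = Σ_{k=0}^{h} [ C(h,k) C(h+k,k) (1/3)^{h+k+1} + 2 C(h,k) Σ_{j=0}^{k−1} C(h+j,j) (1/3)^{h+j+1} ]. Then ρ^{(h+1)} → 1/2 as h → ∞. (That is, in the 3-site multilayer parking system the asymptotic density of the center site in high layers is 1/2.) -/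
/-!
Write `a_j = C(h+j, j) 3^{-(h+j+1)}`, so that `2^{h+1} a_j` is the probability that the
`(h+1)`-st success of independent Bernoulli(2/3) trials occurs at trial `h+j+1`, and
`T_k = 2^{h+1} ∑_{j<k} a_j = P(Bin(h+k, 2/3) ≥ h+1)`. Then `2 ρ^{(h+1)} = 1 - ∑_k C(h,k) a_k`
amounts to `∑_k C(h,k) (3 T_{k+1} + T_k) = 2^{h+1}`. Averaging
`P(Bin(n+k, 2/3) ≥ t)` over `k ~ Bin(h, 1/2)` amounts to adding `h` trials of success probability
`1/3`, so both sums become tails of `Bin(·, 2/3) + Bin(h, 1/3)`, i.e. probabilities that one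
`Bin(·, 2/3)` variable beats an independent one; the identity then reduces to two complementary
events. Finally `∑_k C(h,k) a_k ≤ max_k C(h,k) / 2^{h+1} = O(h^{-1/2})`.
-/

open Real Finset Filter

namespace MultilayerParking

noncomputable def binomWeight (n s : ℕ) : ℝ := n.choose s * 2 ^ s / 3 ^ n

noncomputable def expectBinom (n : ℕ) (f : ℕ → ℝ) : ℝ :=
  ∑ s ∈ range (n + 1), binomWeight n s * f s

theorem binomWeight_nonneg (n s : ℕ) : 0 ≤ binomWeight n s := by
  unfold binomWeight; positivity

theorem binomWeight_of_lt {n s : ℕ} (hs : n < s) : binomWeight n s = 0 := by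
  simp [binomWeight, Nat.choose_eq_zero_of_lt hs]

theorem binomWeight_succ_succ (n s : ℕ) :
    binomWeight (n + 1) (s + 1) = 2 / 3 * binomWeight n s + 1 / 3 * binomWeight n (s + 1) := by
  simp only [binomWeight, Nat.choose_succ_succ', Nat.cast_add]
  field_simp
  ring

theorem binomWeight_succ_zero (n : ℕ) : binomWeight (n + 1) 0 = 1 / 3 * binomWeight n 0 := by
  simp only [binomWeight, Nat.choose_zero_right]
  field_simp
  ring

theorem sum_binomWeight (n : ℕ) : ∑ s ∈ range (n + 1), binomWeight n s = 1 := by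
  simp only [binomWeight]
  rw [← sum_div, div_eq_one_iff_eq (by positivity),
    show (3 : ℝ) = 2 + 1 by norm_num, add_pow]
  simp [mul_comm]

theorem expectBinom_one (n : ℕ) : expectBinom n (fun _ => 1) = 1 := by
  simpa [expectBinom] using sum_binomWeight n

theorem expectBinom_linear (n : ℕ) (a b : ℝ) (f g : ℕ → ℝ) :
    expectBinom n (fun s => a * f s + b * g s) = a * expectBinom n f + b * expectBinom n g := by
  simp only [expectBinom, mul_sum, ← sum_add_distrib]
  exact sum_congr rfl fun s _ => by ring

theorem expectBinom_mono {n : ℕ} {f g : ℕ → ℝ} (hfg : ∀ s, f s ≤ g s) :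
    expectBinom n f ≤ expectBinom n g :=
  sum_le_sum fun s _ => mul_le_mul_of_nonneg_left (hfg s) (binomWeight_nonneg n s)

theorem expectBinom_succ (n : ℕ) (f : ℕ → ℝ) :
    expectBinom (n + 1) f =
      1 / 3 * expectBinom n f + 2 / 3 * expectBinom n (fun s => f (s + 1)) := by
  have hextend : ∑ s ∈ range (n + 2), binomWeight n s * f s = expectBinom n f := by
    rw [sum_range_succ, binomWeight_of_lt n.lt_succ_self, zero_mul, add_zero, expectBinom]
  rw [← hextend, expectBinom, sum_range_succ', sum_range_succ' _ (n + 1), expectBinom]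
  simp only [binomWeight_succ_succ, binomWeight_succ_zero, add_mul, mul_assoc, sum_add_distrib,
    ← mul_sum]
  ring

theorem sum_range_succ_choose_mul (m : ℕ) (f : ℕ → ℝ) :
    ∑ k ∈ range (m + 2), ((m + 1).choose k : ℝ) * f k =
      ∑ k ∈ range (m + 1), (m.choose k : ℝ) * f k +
        ∑ k ∈ range (m + 1), (m.choose k : ℝ) * f (k + 1) := by
  have hextend : ∑ k ∈ range (m + 2), (m.choose k : ℝ) * f k =
      ∑ k ∈ range (m + 1), (m.choose k : ℝ) * f k := by
    rw [sum_range_succ, Nat.choose_eq_zero_of_lt m.lt_succ_self, Nat.cast_zero, zero_mul, add_zero]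
  rw [← hextend, sum_range_succ', sum_range_succ' _ (m + 1)]
  simp only [Nat.choose_succ_succ', Nat.cast_add, add_mul, sum_add_distrib, Nat.choose_zero_right]
  ring

noncomputable def upperTail (t n : ℕ) : ℝ := expectBinom n fun s => if t ≤ s then 1 else 0

theorem upperTail_of_lt {t n : ℕ} (h : n < t) : upperTail t n = 0 := by
  rw [upperTail, expectBinom]
  exact sum_eq_zero fun s hs => by rw [if_neg (by rw [mem_range] at hs; omega), mul_zero]

theorem upperTail_le_one (t n : ℕ) : upperTail t n ≤ 1 :=
  (expectBinom_mono fun s => by split_ifs <;> norm_num).trans_eq (expectBinom_one n)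

theorem upperTail_succ (t n : ℕ) :
    upperTail t (n + 1) = 1 / 3 * upperTail t n + 2 / 3 * upperTail (t - 1) n := by
  simp only [upperTail, expectBinom_succ, Nat.sub_le_iff_le_add]

theorem upperTail_eq_upperTail_succ_add (t n : ℕ) :
    upperTail t n = upperTail (t + 1) n + binomWeight n t := by
  have hsplit : (fun s => if t ≤ s then (1 : ℝ) else 0) =
      fun s => 1 * (if t + 1 ≤ s then 1 else 0) + 1 * (if s = t then 1 else 0) := by
    funext s
    split_ifs <;> first | omega | norm_num
  have hpoint : expectBinom n (fun s => if s = t then 1 else 0) = binomWeight n t := by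
    simp only [expectBinom, mul_ite, mul_one, mul_zero, sum_ite_eq', mem_range]
    split_ifs with ht
    · rfl
    · exact (binomWeight_of_lt (by omega)).symm
  rw [upperTail, hsplit, expectBinom_linear, hpoint, upperTail]
  ring

theorem upperTail_succ_succ (t n : ℕ) :
    upperTail (t + 1) (n + 1) = upperTail (t + 1) n + 2 / 3 * binomWeight n t := by
  rw [upperTail_succ, Nat.add_sub_cancel, upperTail_eq_upperTail_succ_add t n]
  ring

/-- `P(A + (m - C) ≥ t)` for independent `A ~ Bin(n, 2/3)`, `C ~ Bin(m, 2/3)`, i.e. the upper tail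
of `Bin(n, 2/3) + Bin(m, 1/3)`; the truncated `t + c - m` is harmless since
`t + c - m ≤ a ↔ t + c ≤ a + m`. -/
noncomputable def mixedTail (t n m : ℕ) : ℝ := expectBinom m fun c => upperTail (t + c - m) n

theorem mixedTail_zero (t n : ℕ) : mixedTail t n 0 = upperTail t n := by
  simp [mixedTail, expectBinom, binomWeight]

theorem mixedTail_succ (t n m : ℕ) :
    mixedTail t n (m + 1) = (mixedTail t n m + mixedTail t (n + 1) m) / 2 := by
  set X := expectBinom m fun c => upperTail (t + c - (m + 1)) n
  have h1 : mixedTail t n (m + 1) = 1 / 3 * X + 2 / 3 * mixedTail t n m := by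
    have hshift : ∀ c, t + (c + 1) - (m + 1) = t + c - m := fun c => by omega
    simp only [mixedTail, expectBinom_succ, hshift, X]
  have h2 : mixedTail t (n + 1) m = 1 / 3 * mixedTail t n m + 2 / 3 * X := by
    simp only [mixedTail, upperTail_succ, expectBinom_linear, Nat.sub_sub, X]
  linarith

/-- Running `k ~ Bin(m, 1/2)` extra trials of success probability `2/3` is the same as running `m`
trials of success probability `1/3`. -/
theorem sum_choose_mul_upperTail (t n m : ℕ) :
    ∑ k ∈ range (m + 1), (m.choose k : ℝ) * upperTail t (n + k) =
      2 ^ m * mixedTail t n m := by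
  induction m generalizing n with
  | zero => simp [mixedTail_zero]
  | succ m ih =>
    have hnext : ∑ k ∈ range (m + 1), (m.choose k : ℝ) * upperTail t (n + (k + 1)) =
        2 ^ m * mixedTail t (n + 1) m := by
      rw [← ih (n + 1)]
      exact sum_congr rfl fun k _ => by rw [← add_assoc, add_right_comm]
    rw [sum_range_succ_choose_mul, ih n, hnext, mixedTail_succ, pow_succ]
    ring

/-- For independent `A ~ Bin(n, 2/3)` and `C ~ Bin(m, 2/3)` the summands are `P(C ≤ A)` and
`P(A < C)`. -/
theorem mixedTail_add_mixedTail_eq_one (n m : ℕ) :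
    mixedTail m n m + mixedTail (n + 1) m n = 1 := by
  have htotal :
      ∑ c ∈ range (m + 1), ∑ a ∈ range (n + 1), binomWeight m c * binomWeight n a = 1 := by
    rw [← sum_mul_sum, sum_binomWeight, sum_binomWeight, one_mul]
  simp only [mixedTail, upperTail, expectBinom, mul_sum]
  rw [sum_comm (s := range (n + 1)), ← sum_add_distrib]
  refine Eq.trans ?_ htotal
  refine sum_congr rfl fun c _ => ?_
  rw [← sum_add_distrib]
  refine sum_congr rfl fun a _ => ?_
  split_ifs <;> first | omega | ring

noncomputable def negBinomTerm (h j : ℕ) : ℝ :=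
  ((h + j).choose j : ℝ) * (1 / 3 : ℝ) ^ (h + j + 1)

theorem negBinomTerm_nonneg (h j : ℕ) : 0 ≤ negBinomTerm h j := by
  unfold negBinomTerm; positivity

theorem two_thirds_mul_binomWeight (h k : ℕ) :
    2 / 3 * binomWeight (h + k) h = 2 ^ (h + 1) * negBinomTerm h k := by
  rw [binomWeight, negBinomTerm, Nat.choose_symm_add, one_div_pow]
  field_simp
  ring

theorem upperTail_eq_sum_negBinomTerm (h k : ℕ) :
    upperTail (h + 1) (h + k) = 2 ^ (h + 1) * ∑ j ∈ range k, negBinomTerm h j := by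
  induction k with
  | zero => simp [upperTail_of_lt]
  | succ k ih =>
    rw [← add_assoc, upperTail_succ_succ, ih, two_thirds_mul_binomWeight, sum_range_succ, mul_add]

theorem sum_choose_mul_three_upperTail_add_upperTail (h : ℕ) :
    ∑ k ∈ range (h + 1), (h.choose k : ℝ) *
      (3 * upperTail (h + 1) (h + 1 + k) + upperTail (h + 1) (h + k)) = 2 ^ (h + 1) := by
  have hshifted := sum_choose_mul_upperTail (h + 1) (h + 1) h
  have hplain := sum_choose_mul_upperTail (h + 1) h h
  have hstep := mixedTail_succ (h + 1) h h
  have hcompl := mixedTail_add_mixedTail_eq_one h (h + 1)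
  simp only [mul_add, sum_add_distrib, mul_left_comm _ (3 : ℝ), ← mul_sum, hshifted, hplain,
    pow_succ]
  linear_combination (2 : ℝ) ^ h * (2 * hcompl - 2 * hstep)

noncomputable def endDensity (h : ℕ) : ℝ :=
  ∑ k ∈ range (h + 1),
    ((h.choose k : ℝ) * ((h + k).choose k : ℝ) * (1 / 3 : ℝ) ^ (h + k + 1) +
      2 * (h.choose k : ℝ) *
        ∑ j ∈ range k, ((h + j).choose j : ℝ) * (1 / 3 : ℝ) ^ (h + j + 1))

noncomputable def deficit (h : ℕ) : ℝ :=
  ∑ k ∈ range (h + 1), (h.choose k : ℝ) * negBinomTerm h k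

theorem endDensity_eq (h : ℕ) : endDensity h = 1 / 2 - deficit h / 2 := by
  have key : 2 ^ (h + 1) * (2 * endDensity h + deficit h) = 2 ^ (h + 1) * 1 := by
    refine Eq.trans ?_ ((sum_choose_mul_three_upperTail_add_upperTail h).trans (mul_one _).symm)
    rw [endDensity, deficit, mul_sum, ← sum_add_distrib, mul_sum]
    refine sum_congr rfl fun k _ => ?_
    rw [show h + 1 + k = h + (k + 1) by ring, upperTail_eq_sum_negBinomTerm,
      upperTail_eq_sum_negBinomTerm, sum_range_succ]
    simp only [negBinomTerm]
    ring
  linarith [mul_left_cancel₀ (by positivity) key]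

theorem deficit_nonneg (h : ℕ) : 0 ≤ deficit h :=
  sum_nonneg fun k _ => mul_nonneg (Nat.cast_nonneg _) (negBinomTerm_nonneg h k)

theorem deficit_le (h : ℕ) :
    deficit h ≤ 2 * ((h / 2 + 1).centralBinom / 4 ^ (h / 2 + 1)) := by
  set n := h / 2 + 1
  have hchoose (k : ℕ) : (h.choose k : ℝ) ≤ n.centralBinom := by
    exact_mod_cast
      (Nat.choose_le_choose k (by omega : h ≤ 2 * n)).trans (Nat.choose_le_centralBinom k n)
  have hterms : ∑ k ∈ range (h + 1), negBinomTerm h k ≤ 1 / 2 ^ (h + 1) := by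
    rw [le_div_iff₀ (by positivity), mul_comm, ← upperTail_eq_sum_negBinomTerm]
    exact upperTail_le_one _ _
  have hpow : (4 : ℝ) ^ n ≤ 2 * 2 ^ (h + 1) := by
    have : 4 ^ n ≤ 2 * 2 ^ (h + 1) := by
      calc 4 ^ n = 4 * 2 ^ (2 * (h / 2)) := by rw [pow_succ, pow_mul]; ring
        _ ≤ 4 * 2 ^ h := Nat.mul_le_mul_left 4 (Nat.pow_le_pow_right two_pos (Nat.mul_div_le h 2))
        _ = 2 * 2 ^ (h + 1) := by ring
    exact_mod_cast this
  calc deficit h ≤ ∑ k ∈ range (h + 1), (n.centralBinom : ℝ) * negBinomTerm h k :=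
        sum_le_sum fun k _ => mul_le_mul_of_nonneg_right (hchoose k) (negBinomTerm_nonneg h k)
    _ ≤ n.centralBinom * (1 / 2 ^ (h + 1)) := by rw [← mul_sum]; gcongr
    _ ≤ 2 * (n.centralBinom / 4 ^ n) := by
      rw [mul_one_div, mul_div_assoc', div_le_div_iff₀ (by positivity) (by positivity)]
      nlinarith [Nat.cast_nonneg (α := ℝ) n.centralBinom]

theorem centralBinom_sq_mul_le (n : ℕ) : n.centralBinom ^ 2 * (2 * n + 1) ≤ 16 ^ n := by
  induction n with
  | zero => simp
  | succ n ih =>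
    refine Nat.le_of_mul_le_mul_left ?_ (by positivity : 0 < (n + 1) ^ 2)
    calc (n + 1) ^ 2 * ((n + 1).centralBinom ^ 2 * (2 * (n + 1) + 1))
        = ((n + 1) * (n + 1).centralBinom) ^ 2 * (2 * n + 3) := by ring
      _ = 4 * (2 * n + 1) * (2 * n + 3) * (n.centralBinom ^ 2 * (2 * n + 1)) := by
        rw [Nat.succ_mul_centralBinom_succ]; ring
      _ ≤ 4 * (2 * n + 1) * (2 * n + 3) * 16 ^ n := by gcongr
      _ ≤ 16 * (n + 1) ^ 2 * 16 ^ n := Nat.mul_le_mul_right _ (by nlinarith)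
      _ = (n + 1) ^ 2 * 16 ^ (n + 1) := by ring

theorem tendsto_centralBinom_div_four_pow :
    Tendsto (fun n : ℕ => (n.centralBinom : ℝ) / 4 ^ n) atTop (nhds 0) := by
  have hsq (n : ℕ) : ((n.centralBinom : ℝ) / 4 ^ n) ^ 2 ≤ 1 / ((n : ℝ) + 1) := by
    have hle : (n.centralBinom : ℝ) ^ 2 * (2 * n + 1) ≤ 16 ^ n := by
      exact_mod_cast centralBinom_sq_mul_le n
    rw [div_pow, ← pow_mul, mul_comm n 2, pow_mul, show (4 : ℝ) ^ 2 = 16 by norm_num,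
      div_le_div_iff₀ (by positivity) (by positivity), one_mul]
    nlinarith [sq_nonneg (n.centralBinom : ℝ)]
  have := (squeeze_zero (fun n => by positivity) hsq tendsto_one_div_add_atTop_nhds_zero_nat).sqrt
  simp only [sqrt_zero] at this
  exact this.congr fun n => Real.sqrt_sq (by positivity)

theorem tendsto_deficit : Tendsto deficit atTop (nhds 0) := by
  have hhalf : Tendsto (fun h : ℕ => h / 2 + 1) atTop atTop :=
    tendsto_atTop_atTop.2 fun b => ⟨2 * b, fun h hh => by omega⟩
  refine squeeze_zero deficit_nonneg deficit_le ?_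
  simpa using (tendsto_centralBinom_div_four_pow.comp hhalf).const_mul 2

end MultilayerParking

open MultilayerParking in
/-- The end-density `ρ^{(h+1)}` of the center site at layer `h+1` in the 3-site
multilayer parking system tends to `1/2` as `h → ∞`. -/
theorem end_density_tendsto_one_half :
    Tendsto
      (fun h : ℕ =>
        ∑ k ∈ range (h + 1),
          ((h.choose k : ℝ) * ((h + k).choose k : ℝ) * (1 / 3 : ℝ) ^ (h + k + 1) +
            2 * (h.choose k : ℝ) *
              ∑ j ∈ range k, ((h + j).choose j : ℝ) * (1 / 3 : ℝ) ^ (h + j + 1)))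
      atTop (nhds (1 / 2 : ℝ)) := by
  have hlim : Tendsto (fun h => 1 / 2 - deficit h / 2) atTop (nhds (1 / 2 : ℝ)) := by
    simpa using (tendsto_deficit.div_const 2).const_sub (1 / 2 : ℝ)
  exact hlim.congr fun h => (endDensity_eq h).symm
end

section
/- As r → ∞ (r a positive integer), the sequence (1/2) Σ_{k=0}^{r−1} [ C(r−1,k) (1/2)^{r−1} ] · [ C(r+k−1,k) (2/3)^{r} (1/3)^{k} ] converges to 0. (Probabilistically: if X ~ Binomial(r−1, 1/2) and Y ~ NegativeBinomial(r, 1/3) are independent, then (1/2)·P(X = Y) → 0 as r → ∞.) -/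
open Finset Filter

/-!
Every binomial weight `C(n, k) / 2^n` is small: by Vandermonde, `C(n, k)^2` is one term of
`∑ i, C(n, i)^2 = C(2n, n)`, and `C(2n, n)^2 (3n + 1) ≤ 16^n`, so
`C(n, k) / 2^n ≤ (3n + 1)^(-1/4)`.
The negative binomial weights have total mass at most `1`, so the sum, which averages binomial
weights against them, is at most `(3n + 1)^(-1/4) → 0`.
-/

theorem Nat.choose_sq_le_centralBinom (n k : ℕ) : n.choose k ^ 2 ≤ n.centralBinom := by
  rcases le_or_gt k n with hk | hk
  · rw [Nat.centralBinom_eq_two_mul_choose, ← Nat.sum_range_choose_sq]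
    exact single_le_sum (f := fun i => n.choose i ^ 2) (fun _ _ => Nat.zero_le _)
      (mem_range_succ_iff.mpr hk)
  · simp [Nat.choose_eq_zero_of_lt hk]

theorem Nat.centralBinom_sq_mul_le (n : ℕ) :
    (n.centralBinom : ℝ) ^ 2 * (3 * n + 1) ≤ 16 ^ n := by
  induction n with
  | zero => simp
  | succ n ih =>
    have hrec : ((n + 1 : ℕ) : ℝ) * (n + 1).centralBinom =
        2 * (2 * n + 1) * n.centralBinom := by
      exact_mod_cast n.succ_mul_centralBinom_succ
    push_cast at hrec ⊢
    have hpoly : 4 * (2 * (n : ℝ) + 1) ^ 2 * (3 * n + 4) ≤ 16 * (3 * n + 1) * (n + 1) ^ 2 := by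
      nlinarith
    have hpos : (0 : ℝ) < (n + 1) ^ 2 := by positivity
    refine le_of_mul_le_mul_left ?_ hpos
    calc (n + 1 : ℝ) ^ 2 * ((n + 1).centralBinom ^ 2 * (3 * (n + 1) + 1))
        = (2 * (2 * n + 1) * n.centralBinom) ^ 2 * (3 * (n + 1) + 1) := by
          rw [← hrec]; ring
      _ = (n.centralBinom : ℝ) ^ 2 * (4 * (2 * n + 1) ^ 2 * (3 * n + 4)) := by ring
      _ ≤ (n.centralBinom : ℝ) ^ 2 * (16 * (3 * n + 1) * (n + 1) ^ 2) := by gcongr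
      _ = (n.centralBinom : ℝ) ^ 2 * (3 * n + 1) * (16 * (n + 1) ^ 2) := by ring
      _ ≤ 16 ^ n * (16 * (n + 1) ^ 2) := by gcongr
      _ = (n + 1 : ℝ) ^ 2 * 16 ^ (n + 1) := by ring

theorem choose_mul_half_pow_le (n k : ℕ) :
    (n.choose k : ℝ) * (1 / 2) ^ n ≤ (3 * n + 1 : ℝ) ^ (-(4⁻¹ : ℝ)) := by
  have hsq : ((n.choose k : ℝ) ^ 2) ^ 2 ≤ (n.centralBinom : ℝ) ^ 2 := by
    gcongr; exact_mod_cast n.choose_sq_le_centralBinom k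
  have hpow : ((1 / 2 : ℝ) ^ n) ^ 4 = (1 / 16) ^ n := by
    rw [← pow_mul, mul_comm, pow_mul]; norm_num
  have hpow4 : ((n.choose k : ℝ) * (1 / 2) ^ n) ^ 4 ≤ 1 / (3 * n + 1) := by
    rw [le_div_iff₀ (by positivity)]
    calc ((n.choose k : ℝ) * (1 / 2) ^ n) ^ 4 * (3 * n + 1)
        = ((n.choose k : ℝ) ^ 2) ^ 2 * (3 * n + 1) * ((1 / 2) ^ n) ^ 4 := by ring
      _ ≤ (n.centralBinom : ℝ) ^ 2 * (3 * n + 1) * (1 / 16) ^ n := by rw [hpow]; gcongr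
      _ ≤ 16 ^ n * (1 / 16) ^ n := by gcongr; exact n.centralBinom_sq_mul_le
      _ = 1 := by rw [← mul_pow]; norm_num
  calc (n.choose k : ℝ) * (1 / 2) ^ n
        = (((n.choose k : ℝ) * (1 / 2) ^ n) ^ 4) ^ (4⁻¹ : ℝ) := by
        exact_mod_cast (Real.pow_rpow_inv_natCast (by positivity) four_ne_zero).symm
    _ ≤ (1 / (3 * n + 1 : ℝ)) ^ (4⁻¹ : ℝ) := by gcongr
    _ = (3 * n + 1 : ℝ) ^ (-(4⁻¹ : ℝ)) := by
        rw [Real.rpow_neg (by positivity), one_div, Real.inv_rpow (by positivity)]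

theorem sum_range_choose_mul_pow_le {x : ℝ} (hx₀ : 0 ≤ x) (hx₁ : x < 1) (s m : ℕ) :
    ∑ k ∈ range m, ((s + k).choose k : ℝ) * x ^ k ≤ 1 / (1 - x) ^ (s + 1) := by
  have hsum :
      HasSum (fun k ↦ ((s + k).choose k : ℝ) * x ^ k) (1 / (1 - x) ^ (s + 1)) := by
    have e : (fun k ↦ ((s + k).choose k : ℝ) * x ^ k) =
        fun k ↦ ((k + s).choose s : ℝ) * x ^ k :=
      funext fun k ↦ by rw [add_comm, Nat.choose_symm_add]
    rw [e]
    exact hasSum_choose_mul_geometric_of_norm_lt_one s (by rwa [Real.norm_of_nonneg hx₀])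
  exact sum_le_hasSum (range m) (fun _ _ ↦ by positivity) hsum

theorem sum_range_choose_mul_pow_mul_le_one {x : ℝ} (hx₀ : 0 ≤ x) (hx₁ : x < 1)
    (s m : ℕ) :
    ∑ k ∈ range m, ((s + k).choose k : ℝ) * (1 - x) ^ (s + 1) * x ^ k ≤ 1 := by
  have hpos : 0 < (1 - x) ^ (s + 1) := by apply pow_pos; linarith
  calc ∑ k ∈ range m, ((s + k).choose k : ℝ) * (1 - x) ^ (s + 1) * x ^ k
      = (1 - x) ^ (s + 1) * ∑ k ∈ range m, ((s + k).choose k : ℝ) * x ^ k := by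
        rw [mul_sum]; congr! 1 with k; ring
    _ ≤ (1 - x) ^ (s + 1) * (1 / (1 - x) ^ (s + 1)) := by
        gcongr; exact sum_range_choose_mul_pow_le hx₀ hx₁ s m
    _ = 1 := by field_simp

theorem sum_binomial_mul_negBinomial_le (n : ℕ) :
    ∑ k ∈ range (n + 1), ((n.choose k : ℝ) * (1 / 2) ^ n) *
        (((n + k).choose k : ℝ) * (2 / 3) ^ (n + 1) * (1 / 3) ^ k)
      ≤ (3 * n + 1 : ℝ) ^ (-(4⁻¹ : ℝ)) := by
  set B : ℝ := (3 * n + 1 : ℝ) ^ (-(4⁻¹ : ℝ))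
  calc _ ≤ ∑ k ∈ range (n + 1),
          B * (((n + k).choose k : ℝ) * (2 / 3) ^ (n + 1) * (1 / 3) ^ k) := by
        gcongr with k; exact choose_mul_half_pow_le n k
    _ = B * ∑ k ∈ range (n + 1),
          ((n + k).choose k : ℝ) * (1 - 1 / 3) ^ (n + 1) * (1 / 3) ^ k := by
        rw [mul_sum]; norm_num
    _ ≤ B * 1 := by
        gcongr; exact sum_range_choose_mul_pow_mul_le_one (by norm_num) (by norm_num) n (n + 1)
    _ = B := mul_one B

/-- If `X ~ Binomial(r-1, 1/2)` and `Y ~ NegBinomial(r, 1/3)` are independent, then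
`(1/2)·P(X = Y) → 0` as `r → ∞`. -/
theorem half_prob_eq_tendsto_zero :
    Tendsto
      (fun r : ℕ =>
        (1 / 2 : ℝ) *
          ∑ k ∈ range r,
            (((r - 1).choose k : ℝ) * (1 / 2 : ℝ) ^ (r - 1)) *
              (((r + k - 1).choose k : ℝ) * (2 / 3 : ℝ) ^ r * (1 / 3 : ℝ) ^ k))
      atTop (nhds 0) := by
  rw [← tendsto_add_atTop_iff_nat 1]
  have hbound : Tendsto (fun n : ℕ ↦ (1 / 2 : ℝ) * (3 * n + 1 : ℝ) ^ (-(4⁻¹ : ℝ)))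
      atTop (nhds 0) := by
    have h3n : Tendsto (fun n : ℕ ↦ (3 * n + 1 : ℝ)) atTop atTop :=
      tendsto_atTop_add_const_right _ 1 (tendsto_natCast_atTop_atTop.const_mul_atTop (by norm_num))
    simpa using ((tendsto_rpow_neg_atTop (by norm_num)).comp h3n).const_mul (1 / 2 : ℝ)
  refine squeeze_zero (fun n ↦ by positivity) (fun n ↦ ?_) hbound
  have hidx : ∀ k, n + 1 + k - 1 = n + k := fun k ↦ by omega
  simp only [Nat.add_sub_cancel, hidx]
  gcongr
  exact sum_binomial_mul_negBinomial_le n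
end

section
/- As r → ∞ (r a positive integer), the sequence Σ_{k=0}^{r−1} [ C(r−1,k) (1/2)^{r−1} ] · Σ_{j=0}^{r−k} [ C(r+j−1,j) (2/3)^{r} (1/3)^{j} ] converges to 1/2. -/
/-!
Put `n = r - 1` and `p = 2/3`. The inner sum is a negative binomial distribution function, and
`P(NB(r, p) ≤ m) = P(Bin(r + m, p) ≥ r)`. Splitting the `2r - k` trials as `(n + 2) + (n - k)`
and averaging over `k ~ Bin(n, 1/2)` thins `Bin(n - k, 2/3)` into `Bin(n, 1/3)`, the law of
`n - Y` for `Y ~ Bin(n, p)`. The term is therefore `P(X + Y' > Y)` with `X ~ Bin(2, p)` and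
`Y, Y' ~ Bin(n, p)` independent, and the symmetry `Y ↔ Y'` gives
`P(Y' > Y) = (1 - P(Y' = Y)) / 2`, so the term equals `1/2 + 7/18 P(Y' = Y) + 4/9 P(Y' = Y + 1)`.
Both collision probabilities are bounded by the largest atom of `Bin(n, p)`, which is at most the
central atom of `Bin(3m, p)` (at `2m`, with `m = ⌊n/3⌋`), and the ratio of consecutive central
atoms shows that this atom is at most `1/√(m+1)`.
-/

open Finset Filter

noncomputable def binomPmf (p : ℝ) (n k : ℕ) : ℝ := n.choose k * p ^ k * (1 - p) ^ (n - k)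

noncomputable def binomTail (p : ℝ) (n s : ℕ) : ℝ := ∑ i ∈ Ico s (n + 1), binomPmf p n i

section Binomial

variable {p : ℝ}

lemma binomPmf_nonneg (hp₀ : 0 ≤ p) (hp₁ : p ≤ 1) (n k : ℕ) : 0 ≤ binomPmf p n k := by
  have : 0 ≤ 1 - p := by linarith
  unfold binomPmf; positivity

lemma binomPmf_of_lt {n k : ℕ} (h : n < k) : binomPmf p n k = 0 := by
  simp [binomPmf, Nat.choose_eq_zero_of_lt h]

variable (p)

lemma sum_binomPmf (n : ℕ) : ∑ k ∈ range (n + 1), binomPmf p n k = 1 := by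
  have h := add_pow p (1 - p) n
  rw [add_sub_cancel, one_pow] at h
  rw [h]
  exact sum_congr rfl fun k _ => by unfold binomPmf; ring

lemma binomPmf_zero_right (n : ℕ) : binomPmf p n 0 = (1 - p) ^ n := by
  simp [binomPmf]

lemma binomPmf_succ_zero (n : ℕ) : binomPmf p (n + 1) 0 = (1 - p) * binomPmf p n 0 := by
  simp [binomPmf_zero_right, pow_succ, mul_comm]

lemma binomPmf_succ_succ (n k : ℕ) :
    binomPmf p (n + 1) (k + 1) = p * binomPmf p n k + (1 - p) * binomPmf p n (k + 1) := by
  unfold binomPmf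
  rcases lt_trichotomy k n with h | rfl | h
  · rw [Nat.choose_succ_succ, Nat.succ_sub_succ, show n - k = n - (k + 1) + 1 by omega]
    push_cast; ring
  · simp; ring
  · simp [Nat.choose_eq_zero_of_lt h, Nat.choose_eq_zero_of_lt (Nat.succ_lt_succ h),
      Nat.choose_eq_zero_of_lt (Nat.lt_succ_of_lt h)]

lemma binomPmf_symm {n k : ℕ} (h : k ≤ n) : binomPmf (1 - p) n (n - k) = binomPmf p n k := by
  unfold binomPmf
  rw [Nat.choose_symm h, Nat.sub_sub_self h, sub_sub_cancel]
  ring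

lemma binomPmf_succ_mul {n k : ℕ} (h : k < n) :
    binomPmf p n (k + 1) * ((1 - p) * (k + 1)) = p * (n - k) * binomPmf p n k := by
  have hc : (n.choose (k + 1) : ℝ) * (k + 1) = n.choose k * (n - k) := by
    rw [← Nat.cast_sub h.le]; exact_mod_cast Nat.choose_succ_right_eq n k
  unfold binomPmf
  rw [show n - k = n - (k + 1) + 1 by omega]
  linear_combination p ^ (k + 1) * (1 - p) ^ (n - (k + 1) + 1) * hc

lemma binomTail_eq_sum_Ico {n N : ℕ} (hN : n < N) (s : ℕ) :
    binomTail p n s = ∑ i ∈ Ico s N, binomPmf p n i := by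
  refine sum_subset (Ico_subset_Ico_right hN) fun i hi hi' => binomPmf_of_lt ?_
  simp only [mem_Ico] at hi hi'
  omega

lemma sum_range_add_binomTail {n s : ℕ} (hs : s ≤ n + 1) :
    ∑ i ∈ range s, binomPmf p n i + binomTail p n s = 1 := by
  rw [binomTail, sum_range_add_sum_Ico _ hs, sum_binomPmf]

lemma binomTail_zero (n : ℕ) : binomTail p n 0 = 1 := by
  simpa using sum_range_add_binomTail p (Nat.zero_le (n + 1))

lemma binomTail_of_lt {n s : ℕ} (h : n < s) : binomTail p n s = 0 := by
  rw [binomTail, Ico_eq_empty_of_le h, sum_empty]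

lemma binomTail_eq_add (n s : ℕ) : binomTail p n s = binomPmf p n s + binomTail p n (s + 1) := by
  rw [binomTail_eq_sum_Ico p (Nat.lt_succ_self n), binomTail_eq_sum_Ico p (Nat.lt_succ_self n)]
  rcases le_or_gt s n with h | h
  · exact sum_eq_sum_Ico_succ_bot (by omega) _
  · rw [Ico_eq_empty_of_le (by omega), Ico_eq_empty_of_le (by omega), binomPmf_of_lt h]; simp

lemma binomTail_succ (n s : ℕ) :
    binomTail p (n + 1) s = p * binomTail p n (s - 1) + (1 - p) * binomTail p n s := by
  cases s with
  | zero => simp only [Nat.zero_sub, binomTail_zero]; ring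
  | succ t =>
    rw [Nat.add_sub_cancel, binomTail_eq_sum_Ico p (by omega : n < n + 2) (t + 1)]
    simp only [binomTail, ← sum_Ico_add', binomPmf_succ_succ, sum_add_distrib, ← mul_sum]

lemma binomTail_add (m n s : ℕ) :
    binomTail p (m + n) s = ∑ b ∈ range (n + 1), binomPmf p n b * binomTail p m (s - b) := by
  induction n generalizing s with
  | zero => simp [binomPmf]
  | succ n ih =>
    have hshift := sum_range_succ' (fun b => binomPmf p n b * binomTail p m (s - b)) (n + 1)
    rw [sum_range_succ, binomPmf_of_lt (Nat.lt_succ_self n), zero_mul, add_zero] at hshift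
    rw [← add_assoc, binomTail_succ, ih, ih, hshift, sum_range_succ' _ (n + 1)]
    simp only [binomPmf_succ_succ, binomPmf_succ_zero, add_mul, mul_add, sum_add_distrib, mul_sum,
      Nat.sub_sub, add_comm 1, mul_assoc]
    ring

lemma sum_negBinomial_eq_binomTail (n m : ℕ) :
    ∑ j ∈ range (m + 1), ((n + j).choose j : ℝ) * p ^ (n + 1) * (1 - p) ^ j
      = binomTail p (n + 1 + m) (n + 1) := by
  induction m with
  | zero =>
    rw [binomTail_eq_add, binomTail_of_lt p (by omega)]
    simp [binomPmf]
  | succ m ih =>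
    have hchoose : (n + (m + 1)).choose (m + 1) = (n + 1 + m).choose n := by
      rw [show n + (m + 1) = n + 1 + m by omega,
        Nat.choose_symm_of_eq_add (show n + 1 + m = (m + 1) + n by omega)]
    rw [sum_range_succ, ih, show n + 1 + (m + 1) = n + 1 + m + 1 from rfl, binomTail_succ,
      Nat.add_sub_cancel, binomTail_eq_add p _ n, binomPmf, hchoose,
      show n + 1 + m - n = m + 1 by omega]
    ring

lemma sum_binomPmf_mul_binomPmf (q : ℝ) (n b : ℕ) :
    ∑ j ∈ range (n + 1), binomPmf q n j * binomPmf p j b = binomPmf (q * p) n b := by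
  rcases lt_or_ge n b with hb | hb
  · rw [binomPmf_of_lt hb]
    refine sum_eq_zero fun j hj => ?_
    rw [binomPmf_of_lt (p := p) (n := j) (by simp at hj; omega), mul_zero]
  have hchoose : ∀ u,
      (n.choose (b + u) * (b + u).choose b : ℝ) = n.choose b * (n - b).choose u :=
    fun u => by
      have h := Nat.choose_mul (n := n) (Nat.le_add_right b u)
      rw [Nat.add_sub_cancel_left] at h
      exact_mod_cast h
  have hterm : ∀ u, binomPmf q n (b + u) * binomPmf p (b + u) b
      = n.choose b * (q * p) ^ b
        * ((q * (1 - p)) ^ u * (1 - q) ^ (n - b - u) * (n - b).choose u) := by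
    intro u
    simp only [binomPmf, Nat.add_sub_cancel_left, Nat.sub_sub, mul_pow]
    linear_combination q ^ (b + u) * (1 - q) ^ (n - (b + u)) * p ^ b * (1 - p) ^ u * hchoose u
  rw [← sum_range_add_sum_Ico _ (by omega : b ≤ n + 1), sum_eq_zero fun j hj => by
      rw [binomPmf_of_lt (p := p) (mem_range.mp hj), mul_zero],
    zero_add, sum_Ico_eq_sum_range, show n + 1 - b = n - b + 1 by omega]
  rw [sum_congr rfl fun u _ => hterm u, ← mul_sum, ← add_pow, binomPmf]
  ring

lemma sum_binomPmf_mul_comp_sub (f : ℕ → ℝ) (n : ℕ) :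
    ∑ k ∈ range (n + 1), binomPmf p n k * f (n - k)
      = ∑ k ∈ range (n + 1), binomPmf (1 - p) n k * f k := by
  rw [← sum_range_reflect]
  refine sum_congr rfl fun k hk => ?_
  have hk : k ≤ n := Nat.lt_succ_iff.mp (mem_range.mp hk)
  rw [Nat.add_sub_cancel, Nat.sub_sub_self hk, ← binomPmf_symm (1 - p) hk, sub_sub_cancel]

noncomputable def binomCollision (p : ℝ) (n : ℕ) : ℝ :=
  ∑ c ∈ range (n + 1), binomPmf p n c ^ 2

noncomputable def binomAdjacentCollision (p : ℝ) (n : ℕ) : ℝ :=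
  ∑ c ∈ range n, binomPmf p n (c + 1) * binomPmf p n c

lemma sum_binomPmf_mul_binomTail (n : ℕ) :
    ∑ c ∈ range (n + 1), binomPmf p n c * binomTail p n c
      = ∑ c ∈ range (n + 1), binomPmf p n c * binomTail p n (c + 1) + binomCollision p n := by
  rw [binomCollision, ← sum_add_distrib]
  exact sum_congr rfl fun c _ => by rw [binomTail_eq_add p n c]; ring

lemma sum_binomPmf_mul_binomTail_pred (n : ℕ) :
    ∑ c ∈ range (n + 1), binomPmf p n c * binomTail p n (c - 1)
      = ∑ c ∈ range (n + 1), binomPmf p n c * binomTail p n c + binomAdjacentCollision p n := by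
  rw [sum_range_succ', sum_range_succ' (fun c => binomPmf p n c * binomTail p n c),
    binomAdjacentCollision, add_right_comm, ← sum_add_distrib]
  congr 1
  exact sum_congr rfl fun c _ => by rw [Nat.add_sub_cancel, binomTail_eq_add p n c]; ring

lemma sum_binomPmf_mul_binomTail_succ (n : ℕ) :
    ∑ c ∈ range (n + 1), binomPmf p n c * binomTail p n (c + 1)
      = (1 - binomCollision p n) / 2 := by
  have hswap : ∑ c ∈ range (n + 1), binomPmf p n c * binomTail p n c
      = ∑ i ∈ range (n + 1), binomPmf p n i * ∑ c ∈ range (i + 1), binomPmf p n c := by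
    simp only [binomTail, mul_sum]
    rw [sum_comm' (t' := range (n + 1)) (s' := fun i => range (i + 1)) fun c i => by
      simp only [mem_range, mem_Ico]; omega]
    exact sum_congr rfl fun _ _ => sum_congr rfl fun _ _ => mul_comm _ _
  have hcompl : ∀ i ∈ range (n + 1),
      ∑ c ∈ range (i + 1), binomPmf p n c = 1 - binomTail p n (i + 1) := fun i hi =>
    eq_sub_of_add_eq (sum_range_add_binomTail p (by simp only [mem_range] at hi; omega))
  rw [sum_congr rfl fun i hi => congrArg (binomPmf p n i * ·) (hcompl i hi),
    sum_binomPmf_mul_binomTail] at hswap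
  simp only [mul_sub, mul_one, sum_sub_distrib, sum_binomPmf] at hswap
  linarith

lemma sum_binomPmf_mul_binomTail_add_two (n : ℕ) :
    ∑ c ∈ range (n + 1), binomPmf p n c * binomTail p (n + 2) (c + 1)
      = 1 / 2 + (4 * p - 2 * p ^ 2 - 1) / 2 * binomCollision p n
        + p ^ 2 * binomAdjacentCollision p n := by
  have hsplit : ∀ c, binomTail p (n + 2) (c + 1) = (1 - p) ^ 2 * binomTail p n (c + 1)
      + 2 * p * (1 - p) * binomTail p n c + p ^ 2 * binomTail p n (c - 1) := by
    intro c
    rw [binomTail_add, sum_range_succ, sum_range_succ, sum_range_one,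
      show c + 1 - 2 = c - 1 by omega]
    simp [binomPmf]
  simp only [hsplit, mul_add, sum_add_distrib, mul_left_comm _ ((1 - p) ^ 2),
    mul_left_comm _ (2 * p * (1 - p)), mul_left_comm _ (p ^ 2), ← mul_sum]
  rw [sum_binomPmf_mul_binomTail_pred, sum_binomPmf_mul_binomTail,
    sum_binomPmf_mul_binomTail_succ]
  ring

variable {p}

lemma binomCollision_nonneg (n : ℕ) : 0 ≤ binomCollision p n :=
  sum_nonneg fun _ _ => sq_nonneg _

lemma binomAdjacentCollision_nonneg (hp₀ : 0 ≤ p) (hp₁ : p ≤ 1) (n : ℕ) :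
    0 ≤ binomAdjacentCollision p n :=
  sum_nonneg fun _ _ =>
    mul_nonneg (binomPmf_nonneg hp₀ hp₁ _ _) (binomPmf_nonneg hp₀ hp₁ _ _)

lemma binomCollision_le (hp₀ : 0 ≤ p) (hp₁ : p ≤ 1) {n : ℕ} {M : ℝ}
    (h : ∀ k, binomPmf p n k ≤ M) : binomCollision p n ≤ M :=
  calc binomCollision p n ≤ ∑ c ∈ range (n + 1), binomPmf p n c * M :=
        sum_le_sum fun c _ => by
          rw [sq]; exact mul_le_mul_of_nonneg_left (h c) (binomPmf_nonneg hp₀ hp₁ n c)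
    _ = M := by rw [← sum_mul, sum_binomPmf, one_mul]

lemma binomAdjacentCollision_le (hp₀ : 0 ≤ p) (hp₁ : p ≤ 1) {n : ℕ} {M : ℝ}
    (h : ∀ k, binomPmf p n k ≤ M) : binomAdjacentCollision p n ≤ M := by
  have hM : 0 ≤ M := (binomPmf_nonneg hp₀ hp₁ n 0).trans (h 0)
  calc binomAdjacentCollision p n ≤ ∑ c ∈ range n, M * binomPmf p n c :=
        sum_le_sum fun c _ => mul_le_mul_of_nonneg_right (h _) (binomPmf_nonneg hp₀ hp₁ n c)
    _ ≤ ∑ c ∈ range (n + 1), M * binomPmf p n c :=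
        sum_le_sum_of_subset_of_nonneg (range_subset_range.2 n.le_succ) fun c _ _ =>
          mul_nonneg hM (binomPmf_nonneg hp₀ hp₁ n c)
    _ = M := by rw [← mul_sum, sum_binomPmf, mul_one]

lemma binomPmf_succ_le_of_forall_le (hp₀ : 0 ≤ p) (hp₁ : p ≤ 1) {n : ℕ} {M : ℝ}
    (h : ∀ k, binomPmf p n k ≤ M) (k : ℕ) : binomPmf p (n + 1) k ≤ M := by
  cases k with
  | zero =>
    rw [binomPmf_succ_zero]
    nlinarith [binomPmf_nonneg hp₀ hp₁ n 0, h 0]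
  | succ k =>
    rw [binomPmf_succ_succ]
    nlinarith [h k, h (k + 1)]

end Binomial

lemma binomPmf_two_thirds_le_succ {m k : ℕ} (hk : k < 2 * m) :
    binomPmf (2 / 3) (3 * m) k ≤ binomPmf (2 / 3) (3 * m) (k + 1) := by
  have hratio := binomPmf_succ_mul (2 / 3) (show k < 3 * m by omega)
  have hle : (k : ℝ) + 1 ≤ 2 * (3 * m - k) := by
    have : (k : ℝ) + 1 ≤ 2 * m := by exact_mod_cast hk
    linarith
  push_cast at hratio
  nlinarith [binomPmf_nonneg (p := 2 / 3) (by norm_num) (by norm_num) (3 * m) k]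

lemma binomPmf_two_thirds_succ_le {m k : ℕ} (hk : 2 * m ≤ k) :
    binomPmf (2 / 3) (3 * m) (k + 1) ≤ binomPmf (2 / 3) (3 * m) k := by
  have hnonneg := binomPmf_nonneg (p := 2 / 3) (by norm_num) (by norm_num) (3 * m)
  rcases lt_or_ge k (3 * m) with hlt | hge
  · have hratio := binomPmf_succ_mul (2 / 3) hlt
    have hle : 2 * (3 * m - k) ≤ (k : ℝ) + 1 := by
      have : 2 * (m : ℝ) ≤ k := by exact_mod_cast hk
      linarith
    push_cast at hratio
    nlinarith [hnonneg k, hnonneg (k + 1)]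
  · rw [binomPmf_of_lt (by omega)]
    exact hnonneg k

lemma binomPmf_two_thirds_le_mode (m k : ℕ) :
    binomPmf (2 / 3) (3 * m) k ≤ binomPmf (2 / 3) (3 * m) (2 * m) := by
  rcases le_total k (2 * m) with hk | hk
  · induction hk using Nat.decreasingInduction with
    | self => exact le_rfl
    | of_succ k hk ih => exact (binomPmf_two_thirds_le_succ hk).trans ih
  · induction k, hk using Nat.le_induction with
    | base => exact le_rfl
    | succ k hk ih => exact (binomPmf_two_thirds_succ_le hk).trans ih

lemma binomPmf_two_thirds_add_le_mode (m r k : ℕ) :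
    binomPmf (2 / 3) (3 * m + r) k ≤ binomPmf (2 / 3) (3 * m) (2 * m) := by
  induction r generalizing k with
  | zero => exact binomPmf_two_thirds_le_mode m k
  | succ r ih => exact binomPmf_succ_le_of_forall_le (by norm_num) (by norm_num) ih k

lemma binomPmf_two_thirds_mode_succ (m : ℕ) :
    binomPmf (2 / 3) (3 * (m + 1)) (2 * (m + 1)) * (9 * (2 * m + 1) * (m + 1))
      = binomPmf (2 / 3) (3 * m) (2 * m) * (2 * (3 * m + 1) * (3 * m + 2)) := by
  have h₁ : ((3 * m + 3 : ℕ) : ℝ) * (3 * m + 2).choose (2 * m + 1)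
      = (3 * m + 3).choose (2 * m + 2) * ((2 * m + 2 : ℕ) : ℝ) := by
    exact_mod_cast Nat.add_one_mul_choose_eq (3 * m + 2) (2 * m + 1)
  have h₂ : ((3 * m + 2 : ℕ) : ℝ) * (3 * m + 1).choose (2 * m)
      = (3 * m + 2).choose (2 * m + 1) * ((2 * m + 1 : ℕ) : ℝ) := by
    exact_mod_cast Nat.add_one_mul_choose_eq (3 * m + 1) (2 * m)
  have h₃ : ((3 * m).choose (2 * m) : ℝ) * ((3 * m + 1 : ℕ) : ℝ)
      = (3 * m + 1).choose (2 * m) * ((m + 1 : ℕ) : ℝ) := by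
    rw [← show 3 * m + 1 - 2 * m = m + 1 by omega]
    exact_mod_cast Nat.choose_mul_succ_eq (3 * m) (2 * m)
  have hchoose : ((3 * m + 3).choose (2 * m + 2) : ℝ) * (2 * (2 * m + 1) * (m + 1))
      = (3 * m).choose (2 * m) * (3 * (3 * m + 1) * (3 * m + 2)) := by
    refine mul_left_cancel₀ (show (m : ℝ) + 1 ≠ 0 by positivity) ?_
    push_cast at h₁ h₂ h₃
    linear_combination (-(2 * (m : ℝ) + 1) * (m + 1)) * h₁
      - (3 * (m : ℝ) + 3) * (m + 1) * h₂ - (3 * (m : ℝ) + 3) * (3 * m + 2) * h₃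
  simp only [binomPmf, show 3 * (m + 1) = 3 * m + 3 by ring,
    show 3 * m + 3 - (2 * m + 2) = m + 1 by omega, show 3 * m - 2 * m = m by omega,
    show 2 * (m + 1) = 2 * m + 2 by ring, pow_add]
  linear_combination (2 / 3 : ℝ) ^ (2 * m) * (1 / 3) ^ m * (2 / 3) * hchoose

lemma binomPmf_two_thirds_mode_sq_mul_le (m : ℕ) :
    binomPmf (2 / 3) (3 * m) (2 * m) ^ 2 * (m + 1) ≤ 1 := by
  induction m with
  | zero => simp [binomPmf]
  | succ m ih =>
    set a := binomPmf (2 / 3) (3 * m) (2 * m)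
    set a' := binomPmf (2 / 3) (3 * (m + 1)) (2 * (m + 1))
    set d : ℝ := 9 * (2 * m + 1) * (m + 1)
    set e : ℝ := 2 * (3 * m + 1) * (3 * m + 2)
    have hrec : a' * d = a * e := binomPmf_two_thirds_mode_succ m
    have hd : 0 < d := by positivity
    have hpoly : e ^ 2 * (m + 2) ≤ d ^ 2 * (m + 1) := by
      have hm : (0 : ℝ) ≤ m := m.cast_nonneg
      simp only [d, e]
      nlinarith [pow_nonneg hm 2, pow_nonneg hm 3]
    refine le_of_mul_le_mul_right ?_ (pow_pos hd 2)
    calc a' ^ 2 * ((m + 1 : ℕ) + 1) * d ^ 2 = a ^ 2 * (e ^ 2 * (m + 2)) := by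
          push_cast
          linear_combination (a' * d + a * e) * (m + 2) * hrec
      _ ≤ a ^ 2 * (d ^ 2 * (m + 1)) := mul_le_mul_of_nonneg_left hpoly (sq_nonneg a)
      _ = (a ^ 2 * (m + 1)) * d ^ 2 := by ring
      _ ≤ 1 * d ^ 2 := mul_le_mul_of_nonneg_right ih (sq_nonneg d)

lemma tendsto_binomPmf_two_thirds_mode :
    Tendsto (fun m : ℕ => binomPmf (2 / 3) (3 * m) (2 * m)) atTop (nhds 0) := by
  have hsq : Tendsto (fun m : ℕ => binomPmf (2 / 3) (3 * m) (2 * m) ^ 2) atTop (nhds 0) := by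
    refine squeeze_zero (fun m => sq_nonneg _) (fun m => ?_)
      tendsto_one_div_add_atTop_nhds_zero_nat
    rw [le_div_iff₀ (by positivity)]
    exact binomPmf_two_thirds_mode_sq_mul_le m
  have hsqrt := hsq.sqrt
  rw [Real.sqrt_zero] at hsqrt
  refine hsqrt.congr fun m => Real.sqrt_sq ?_
  exact binomPmf_nonneg (by norm_num) (by norm_num) _ _

lemma binomPmf_two_thirds_le_mode_div (n k : ℕ) :
    binomPmf (2 / 3) n k ≤ binomPmf (2 / 3) (3 * (n / 3)) (2 * (n / 3)) := by
  simpa only [Nat.div_add_mod] using binomPmf_two_thirds_add_le_mode (n / 3) (n % 3) k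

lemma tendsto_binomCollision_two_thirds : Tendsto (binomCollision (2 / 3)) atTop (nhds 0) :=
  squeeze_zero binomCollision_nonneg
    (fun n => binomCollision_le (by norm_num) (by norm_num) (binomPmf_two_thirds_le_mode_div n))
    (tendsto_binomPmf_two_thirds_mode.comp (Nat.tendsto_div_const_atTop three_ne_zero))

lemma tendsto_binomAdjacentCollision_two_thirds :
    Tendsto (binomAdjacentCollision (2 / 3)) atTop (nhds 0) :=
  squeeze_zero (binomAdjacentCollision_nonneg (by norm_num) (by norm_num))
    (fun n => binomAdjacentCollision_le (by norm_num) (by norm_num)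
      (binomPmf_two_thirds_le_mode_div n))
    (tendsto_binomPmf_two_thirds_mode.comp (Nat.tendsto_div_const_atTop three_ne_zero))

lemma binomPmf_one_half {n k : ℕ} (hk : k ≤ n) :
    binomPmf (1 / 2) n k = n.choose k * (1 / 2) ^ n := by
  rw [binomPmf, mul_assoc, show (1 : ℝ) - 1 / 2 = 1 / 2 by norm_num, ← pow_add,
    Nat.add_sub_cancel' hk]

lemma second_term_succ_eq (n : ℕ) :
    ∑ k ∈ range (n + 1), (((n + 1 - 1).choose k : ℝ) * (1 / 2 : ℝ) ^ (n + 1 - 1)) *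
        ∑ j ∈ range (n + 1 - k + 1),
          (((n + 1 + j - 1).choose j : ℝ) * (2 / 3 : ℝ) ^ (n + 1) * (1 / 3 : ℝ) ^ j)
      = 1 / 2 + 7 / 18 * binomCollision (2 / 3) n + 4 / 9 * binomAdjacentCollision (2 / 3) n := by
  have hinner : ∀ k ≤ n, ∑ j ∈ range (n + 1 - k + 1),
      (((n + 1 + j - 1).choose j : ℝ) * (2 / 3 : ℝ) ^ (n + 1) * (1 / 3 : ℝ) ^ j)
        = ∑ b ∈ range (n + 1),
            binomPmf (2 / 3) (n - k) b * binomTail (2 / 3) (n + 2) (n + 1 - b) := by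
    intro k hk
    rw [show (1 / 3 : ℝ) = 1 - 2 / 3 by norm_num]
    simp only [Nat.add_right_comm n 1, Nat.add_sub_cancel]
    rw [sum_negBinomial_eq_binomTail, show n + 1 + (n + 1 - k) = n + 2 + (n - k) by omega,
      binomTail_add]
    refine sum_subset (range_subset_range.2 (by omega)) fun b _ hb => ?_
    rw [binomPmf_of_lt (by simp only [mem_range] at hb; omega), zero_mul]
  have hthin : ∀ b, ∑ k ∈ range (n + 1), binomPmf (1 / 2) n k * binomPmf (2 / 3) (n - k) b
      = binomPmf (1 / 3) n b := by
    intro b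
    rw [sum_binomPmf_mul_comp_sub _ (fun j => binomPmf (2 / 3) j b), sum_binomPmf_mul_binomPmf]
    norm_num
  calc _ = ∑ k ∈ range (n + 1), binomPmf (1 / 2) n k *
        ∑ b ∈ range (n + 1),
          binomPmf (2 / 3) (n - k) b * binomTail (2 / 3) (n + 2) (n + 1 - b) := by
        refine sum_congr rfl fun k hk => ?_
        have hk : k ≤ n := Nat.lt_succ_iff.mp (mem_range.mp hk)
        rw [hinner k hk, Nat.add_sub_cancel, binomPmf_one_half hk]
    _ = ∑ b ∈ range (n + 1), binomPmf (1 / 3) n b * binomTail (2 / 3) (n + 2) (n - b + 1) := by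
        simp only [mul_sum]
        rw [sum_comm]
        refine sum_congr rfl fun b hb => ?_
        rw [← hthin, sum_mul, show n + 1 - b = n - b + 1 by simp only [mem_range] at hb; omega]
        exact sum_congr rfl fun k _ => by ring
    _ = ∑ c ∈ range (n + 1), binomPmf (2 / 3) n c * binomTail (2 / 3) (n + 2) (c + 1) := by
        rw [sum_binomPmf_mul_comp_sub _ (fun c => binomTail (2 / 3) (n + 2) (c + 1))]
        norm_num
    _ = _ := by
        rw [sum_binomPmf_mul_binomTail_add_two]
        norm_num

/-- If `X ~ Binomial(r-1, 1/2)` and `Y ~ NegBinomial(r, 1/3)` are independent, then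
`Σ_k P(X = k) · P(Y ≤ r - k) → 1/2` as `r → ∞`. -/
theorem second_term_tendsto_one_half :
    Tendsto
      (fun r : ℕ =>
        ∑ k ∈ range r,
          (((r - 1).choose k : ℝ) * (1 / 2 : ℝ) ^ (r - 1)) *
            ∑ j ∈ range (r - k + 1),
              (((r + j - 1).choose j : ℝ) * (2 / 3 : ℝ) ^ r * (1 / 3 : ℝ) ^ j))
      atTop (nhds (1 / 2 : ℝ)) := by
  refine (tendsto_add_atTop_iff_nat 1).1 ?_
  have hlim := ((tendsto_binomCollision_two_thirds.const_mul (7 / 18)).add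
    (tendsto_binomAdjacentCollision_two_thirds.const_mul (4 / 9))).const_add (1 / 2)
  rw [mul_zero, mul_zero, add_zero, add_zero] at hlim
  exact hlim.congr fun n => by rw [second_term_succ_eq, add_assoc]
end
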